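/- arXiv:1108.3448 — 10 statements merged into one kernel-verified Lean document; each statement's English description precedes it below -/
import Mathlib

section
/- Let ρ : E → E be a self-adjoint endomorphism of an n-dimensional real inner product space E, and let k ≤ n. If the sum of the k smallest eigenvalues of ρ is nonnegative, then for any k orthonormal vectors v₁,…,v_k in E, the sum ∑_{i=1}^k ⟨ρ v_i, v_i⟩ is nonnegative. -/
open RealInnerProductSpace Finset

lemma sum_filter_lt_aux {n k : ℕ} (hk : k ≤ n) (f : Fin n → ℝ) :
    ∑ j ∈ univ.filter (fun j : Fin n => (j : ℕ) < k), f j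
      = ∑ i : Fin k, f (Fin.castLE hk i) := by
  have hmap : (univ : Finset (Fin k)).map (Fin.castLEEmb hk)
      = univ.filter (fun j : Fin n => (j : ℕ) < k) := by
    ext j
    simp only [Finset.mem_map, Finset.mem_univ, true_and, Finset.mem_filter,
      Fin.castLEEmb_apply]
    constructor
    · rintro ⟨i, rfl⟩; exact i.isLt
    · rintro h; exact ⟨⟨(j : ℕ), h⟩, rfl⟩
  rw [← hmap, Finset.sum_map]
  rfl

lemma key_ineq_aux {n k : ℕ} (hk : k ≤ n) (μ : Fin n → ℝ) (hμ : Monotone μ)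
    (t : Fin n → ℝ) (h0 : ∀ j, 0 ≤ t j) (h1 : ∀ j, t j ≤ 1)
    (hs : ∑ j, t j = k) :
    ∑ i : Fin k, μ (Fin.castLE hk i) ≤ ∑ j, μ j * t j := by
  rcases Nat.eq_zero_or_pos k with rfl | hkpos
  · have hz : ∀ j ∈ (univ : Finset (Fin n)), t j = 0 :=
      Finset.sum_eq_zero_iff_of_nonneg (fun j _ => h0 j) |>.mp (by simpa using hs)
    have : ∀ j : Fin n, t j = 0 := fun j => hz j (mem_univ j)
    simp [this]
  · set c := μ ⟨k - 1, by omega⟩ with hc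
    set s : Fin n → ℝ := fun j => if (j : ℕ) < k then 1 else 0 with hsdef
    have hss : ∑ j, μ j * s j = ∑ i : Fin k, μ (Fin.castLE hk i) := by
      rw [← sum_filter_lt_aux hk μ, Finset.sum_filter]
      apply Finset.sum_congr rfl
      intro j _
      by_cases h : (j : ℕ) < k <;> simp [hsdef, h]
    have hssum : ∑ j, s j = (k : ℝ) := by
      have h := sum_filter_lt_aux hk (fun _ => (1 : ℝ))
      simp only [Finset.sum_filter] at h
      simpa [hsdef] using h
    have hterm : ∀ j, c * (t j - s j) ≤ μ j * (t j - s j) := by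
      intro j
      by_cases h : (j : ℕ) < k
      · have hμj : μ j ≤ c := hμ (by simp [Fin.le_def]; omega)
        have hle : t j - s j ≤ 0 := by simp only [hsdef, if_pos h]; linarith [h1 j]
        nlinarith
      · have hμj : c ≤ μ j := hμ (by simp [Fin.le_def]; omega)
        have hge : 0 ≤ t j - s j := by simp only [hsdef, if_neg h]; linarith [h0 j]
        nlinarith
    have h2 : 0 ≤ ∑ j, μ j * (t j - s j) := by
      calc (0:ℝ) = ∑ j, c * (t j - s j) := by
            rw [← Finset.mul_sum, Finset.sum_sub_distrib, hs, hssum]; ring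
        _ ≤ ∑ j, μ j * (t j - s j) := Finset.sum_le_sum (fun j _ => hterm j)
    have expand : ∑ j, μ j * (t j - s j) = ∑ j, μ j * t j - ∑ j, μ j * s j := by
      rw [← Finset.sum_sub_distrib]; apply Finset.sum_congr rfl; intros; ring
    rw [← hss]
    linarith [expand ▸ h2]

/-- If `ρ` is a self-adjoint endomorphism of an `n`-dimensional real inner product space
with eigenvalues `μ 0 ≤ … ≤ μ (n-1)` (given by an orthonormal eigenbasis `e`), and the sum
of the `k` smallest eigenvalues is nonnegative, then for any `k` orthonormal vectors `v i`
the sum `∑ ⟪ρ (v i), v i⟫` is nonnegative. -/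
theorem stmt0 {E : Type*} [NormedAddCommGroup E] [InnerProductSpace ℝ E]
    [FiniteDimensional ℝ E] {n k : ℕ} (hn : Module.finrank ℝ E = n) (hk : k ≤ n)
    (ρ : E →ₗ[ℝ] E) (hρ : ρ.IsSymmetric)
    (e : OrthonormalBasis (Fin n) ℝ E) (μ : Fin n → ℝ) (hμ : Monotone μ)
    (heig : ∀ i, ρ (e i) = μ i • e i)
    (hsum : 0 ≤ ∑ i : Fin k, μ (Fin.castLE hk i))
    (v : Fin k → E) (hv : Orthonormal ℝ v) :
    0 ≤ ∑ i : Fin k, ⟪ρ (v i), v i⟫ := by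
  have hx : ∀ x : E, ⟪ρ x, x⟫ = ∑ j, μ j * ⟪x, e j⟫ ^ 2 := by
    intro x
    rw [← e.sum_inner_mul_inner (ρ x) x]
    apply Finset.sum_congr rfl
    intro j _
    rw [hρ x (e j), heig j, real_inner_smul_right, real_inner_comm (e j) x]
    ring
  set t : Fin n → ℝ := fun j => ∑ i : Fin k, ⟪v i, e j⟫ ^ 2 with ht
  have hswap : ∑ i : Fin k, ⟪ρ (v i), v i⟫ = ∑ j, μ j * t j := by
    simp only [hx, ht]
    rw [Finset.sum_comm]
    apply Finset.sum_congr rfl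
    intro j _
    rw [Finset.mul_sum]
  have h0 : ∀ j, 0 ≤ t j := fun j => Finset.sum_nonneg (fun i _ => sq_nonneg _)
  have h1 : ∀ j, t j ≤ 1 := by
    intro j
    have := hv.sum_inner_products_le (e j) (s := univ)
    simp only [Real.norm_eq_abs, sq_abs] at this
    simpa [ht, e.orthonormal.1 j] using this
  have hpar : ∀ x : E, ∑ j, ⟪x, e j⟫ ^ 2 = ‖x‖ ^ 2 := by
    intro x
    have h := e.sum_inner_mul_inner x x
    rw [real_inner_self_eq_norm_sq] at h
    rw [← h]
    apply Finset.sum_congr rfl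
    intro j _
    rw [real_inner_comm (e j) x]; ring
  have hs : ∑ j, t j = (k : ℝ) := by
    rw [Finset.sum_comm]
    have : ∀ i : Fin k, ∑ j, ⟪v i, e j⟫ ^ 2 = 1 := by
      intro i
      rw [hpar, hv.1 i]
      norm_num
    simp [this]
  rw [hswap]
  calc (0:ℝ) ≤ ∑ i : Fin k, μ (Fin.castLE hk i) := hsum
    _ ≤ ∑ j, μ j * t j := key_ineq_aux hk μ hμ t h0 h1 hs
end

section
/- Let ρ be a self-adjoint endomorphism of an n-dimensional real inner product space with eigenvalues λ₁ ≤ … ≤ λ_n. Then the infimum of ∑_{i=1}^k ⟨ρ v_i, v_i⟩ over all orthonormal families v₁,…,v_k equals λ₁ + … + λ_k. -/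
open RealInnerProductSpace Finset

-- combinatorial lemma
lemma key_comb {n k : ℕ} (hk : k ≤ n) (μ : Fin n → ℝ) (hμ : Monotone μ) (t : Fin n → ℝ)
    (h0 : ∀ j, 0 ≤ t j) (h1 : ∀ j, t j ≤ 1) (hs : ∑ j, t j = (k : ℝ)) :
    ∑ i : Fin k, μ (Fin.castLE hk i) ≤ ∑ j, μ j * t j := by
  have himg : (Finset.univ : Finset (Fin k)).map (Fin.castLEEmb hk)
      = Finset.univ.filter (fun j : Fin n => (j : ℕ) < k) := by
    ext j
    simp only [Finset.mem_map, Finset.mem_univ, true_and, Finset.mem_filter, Fin.castLEEmb_apply]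
    constructor
    · rintro ⟨i, rfl⟩; exact i.isLt
    · intro h; exact ⟨⟨j, h⟩, rfl⟩
  have hL : ∑ i : Fin k, μ (Fin.castLE hk i)
      = ∑ j : Fin n, μ j * (if (j : ℕ) < k then (1:ℝ) else 0) := by
    have hm := Finset.sum_map Finset.univ (Fin.castLEEmb hk) μ
    simp only [Fin.castLEEmb_apply] at hm
    rw [← hm, himg, Finset.sum_filter]
    apply Finset.sum_congr rfl
    intro j _; split <;> ring
  rw [hL]
  rcases Nat.eq_zero_or_pos k with rfl | hkpos
  · have hzero : ∀ j ∈ (Finset.univ : Finset (Fin n)), t j = 0 := by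
      intro j _
      have := (Finset.sum_eq_zero_iff_of_nonneg (fun j _ => h0 j)).1 (by simpa using hs)
      exact this j (Finset.mem_univ j)
    have h2 : ∑ j, μ j * t j = 0 :=
      Finset.sum_eq_zero fun j hj => by rw [hzero j hj, mul_zero]
    simp [h2]
  · set c := μ ⟨k - 1, by omega⟩ with hc
    have hdiff : 0 ≤ ∑ j : Fin n, (μ j - c) * (t j - (if (j : ℕ) < k then (1:ℝ) else 0)) := by
      apply Finset.sum_nonneg
      intro j _
      by_cases h : (j : ℕ) < k
      · simp only [h, if_true]
        have h1' : μ j ≤ c := hμ (by simp [Fin.le_def]; omega)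
        have : t j - 1 ≤ 0 := by linarith [h1 j]
        nlinarith [h1 j]
      · simp only [h, if_false, sub_zero]
        have h1' : c ≤ μ j := hμ (by simp [Fin.le_def]; omega)
        exact mul_nonneg (by linarith) (h0 j)
    have hsumind : ∑ j : Fin n, (if (j : ℕ) < k then (1:ℝ) else 0) = (k : ℝ) := by
      have h3 : ∑ j : Fin n, (if (j : ℕ) < k then (1:ℝ) else 0)
          = ∑ _j ∈ Finset.univ.filter (fun j : Fin n => (j : ℕ) < k), (1:ℝ) :=
        (Finset.sum_filter _ _).symm
      rw [h3, ← himg]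
      simp
    have expand : ∑ j : Fin n, (μ j - c) * (t j - (if (j : ℕ) < k then (1:ℝ) else 0))
        = ∑ j, μ j * t j - ∑ j : Fin n, μ j * (if (j : ℕ) < k then (1:ℝ) else 0)
          - c * (∑ j, t j) + c * (∑ j : Fin n, (if (j : ℕ) < k then (1:ℝ) else 0)) := by
      rw [Finset.mul_sum, Finset.mul_sum, ← Finset.sum_sub_distrib, ← Finset.sum_sub_distrib,
        ← Finset.sum_add_distrib]
      apply Finset.sum_congr rfl
      intro j _; ring
    rw [expand, hs, hsumind] at hdiff
    linarith

/-- For a self-adjoint endomorphism `ρ` of an `n`-dimensional real inner product space with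
increasingly sorted eigenvalues `μ` (given by an orthonormal eigenbasis), the infimum of
`∑_{i<k} ⟪ρ (v i), v i⟫` over all orthonormal families `v : Fin k → E` equals
`μ 0 + … + μ (k-1)`. -/
theorem stmt3 {E : Type*} [NormedAddCommGroup E] [InnerProductSpace ℝ E]
    [FiniteDimensional ℝ E] {n k : ℕ} (hn : Module.finrank ℝ E = n) (hk : k ≤ n)
    (ρ : E →ₗ[ℝ] E) (hρ : ρ.IsSymmetric)
    (e : OrthonormalBasis (Fin n) ℝ E) (μ : Fin n → ℝ) (hμ : Monotone μ)
    (heig : ∀ i, ρ (e i) = μ i • e i) :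
    IsGLB {r : ℝ | ∃ v : Fin k → E, Orthonormal ℝ v ∧ r = ∑ i : Fin k, ⟪ρ (v i), v i⟫}
      (∑ i : Fin k, μ (Fin.castLE hk i)) := by
  have quad : ∀ x : E, ⟪ρ x, x⟫ = ∑ j : Fin n, μ j * ⟪e j, x⟫ ^ 2 := by
    intro x
    have h1 : ∑ j : Fin n, ⟪ρ x, e j⟫ * ⟪e j, x⟫ = ⟪ρ x, x⟫ :=
      e.sum_inner_mul_inner (ρ x) x
    rw [← h1]
    apply Finset.sum_congr rfl
    intro j _
    rw [hρ x (e j), heig j, real_inner_smul_right, real_inner_comm x (e j)]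
    ring
  constructor
  · rintro r ⟨v, hv, rfl⟩
    set t : Fin n → ℝ := fun j => ∑ i : Fin k, ⟪e j, v i⟫ ^ 2 with ht
    have hrw : ∑ i : Fin k, ⟪ρ (v i), v i⟫ = ∑ j : Fin n, μ j * t j := by
      simp_rw [quad, ht, Finset.mul_sum]
      rw [Finset.sum_comm]
    rw [hrw]
    apply key_comb hk μ hμ t
    · intro j; exact Finset.sum_nonneg fun i _ => sq_nonneg _
    · intro j
      have hb := hv.sum_inner_products_le (e j) (s := Finset.univ)
      have hej : ‖e j‖ = 1 := e.orthonormal.1 j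
      simp only [hej, one_pow] at hb
      calc t j = ∑ i : Fin k, ‖⟪v i, e j⟫‖ ^ 2 := by
            apply Finset.sum_congr rfl
            intro i _
            rw [Real.norm_eq_abs, sq_abs, real_inner_comm]
        _ ≤ 1 := hb
    · have hnorm : ∀ i : Fin k, ∑ j : Fin n, ⟪e j, v i⟫ ^ 2 = 1 := by
        intro i
        have h1 : ∑ j : Fin n, ⟪v i, e j⟫ * ⟪e j, v i⟫ = ⟪v i, v i⟫ :=
          e.sum_inner_mul_inner (v i) (v i)
        have h2 : ⟪v i, v i⟫ = 1 := by
          rw [real_inner_self_eq_norm_sq, hv.1 i]; norm_num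
        rw [h2] at h1
        rw [← h1]
        apply Finset.sum_congr rfl
        intro j _
        rw [real_inner_comm (v i) (e j)]; ring
      rw [ht]
      rw [Finset.sum_comm]
      simp [hnorm]
  · intro b hb
    apply hb
    refine ⟨fun i => e (Fin.castLE hk i), e.orthonormal.comp _ (Fin.castLE_injective hk), ?_⟩
    apply Finset.sum_congr rfl
    intro i _
    rw [heig, real_inner_smul_left, real_inner_self_eq_norm_sq, e.orthonormal.1]
    norm_num
end

section
/- Let R be an algebraic curvature tensor on a real inner product space V with nonnegative sectional curvature, i.e., ⟨R(x,y)y,x⟩ ≥ 0 for all x, y. If x, y ∈ V satisfy ⟨R(x,y)y,x⟩ = 0, then R(x,y)y = 0. -/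
open scoped RealInnerProductSpace

lemma quad_aux (a b : ℝ) (h : ∀ t : ℝ, 0 ≤ a * t ^ 2 + 2 * b * t) : b = 0 := by
  by_contra hb
  have hbp : 0 < b ^ 2 := by positivity
  rcases le_or_gt a 0 with ha | ha
  · have h1 := h (-b)
    nlinarith [mul_nonpos_of_nonpos_of_nonneg ha (sq_nonneg b)]
  · have h1 := h (-b / a)
    have heq : a * (-b / a) ^ 2 + 2 * b * (-b / a) = -(b ^ 2 / a) := by
      field_simp; ring
    rw [heq] at h1
    have := div_pos hbp ha
    linarith

/-- For an algebraic curvature tensor with nonnegative sectional curvature,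
if ⟪R(x,y)y, x⟫ = 0 then R(x,y)y = 0. -/
theorem stmt4 {V : Type*} [NormedAddCommGroup V] [InnerProductSpace ℝ V] [FiniteDimensional ℝ V]
    (R : V →ₗ[ℝ] V →ₗ[ℝ] V →ₗ[ℝ] V)
    (hanti1 : ∀ x y, R x y = - R y x)
    (hanti2 : ∀ x y z w, ⟪R x y z, w⟫ = - ⟪R x y w, z⟫)
    (hpair : ∀ x y z w, ⟪R x y z, w⟫ = ⟪R z w x, y⟫)
    (hbianchi : ∀ x y z, R x y z + R y z x + R z x y = 0)
    (hnonneg : ∀ x y, 0 ≤ ⟪R x y y, x⟫)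
    (x y : V) (h : ⟪R x y y, x⟫ = 0) :
    R x y y = 0 := by
  set w := R x y y with hw
  -- Jacobi operator symmetry: ⟪R w y y, x⟫ = ⟪R x y y, w⟫
  have key : ⟪R w y y, x⟫ = ⟪R x y y, w⟫ := by
    have h1 : ⟪R w y y, x⟫ = ⟪R y x w, y⟫ := hpair w y y x
    have h2 : R y x = - R x y := hanti1 y x
    have h3 : ⟪R y x w, y⟫ = - ⟪R x y w, y⟫ := by rw [h2]; simp
    have h4 : ⟪R x y y, w⟫ = - ⟪R x y w, y⟫ := hanti2 x y y w
    linarith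
  -- Quadratic nonnegativity
  have hq : ∀ t : ℝ, 0 ≤ ⟪R w y y, w⟫ * t ^ 2 + 2 * ⟪R x y y, w⟫ * t := by
    intro t
    have hn := hnonneg (x + t • w) y
    have hexp : R (x + t • w) y y = R x y y + t • R w y y := by
      simp [map_add, map_smul]
    rw [hexp] at hn
    rw [inner_add_left, inner_add_right, inner_add_right, real_inner_smul_left,
      real_inner_smul_left, real_inner_smul_right, real_inner_smul_right] at hn
    have hx : ⟪R x y y, x⟫ = 0 := h
    rw [key, hx] at hn
    ring_nf at hn ⊢
    linarith
  have hb : ⟪R x y y, w⟫ = 0 := quad_aux _ _ hq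
  have : ⟪w, w⟫ = 0 := by rw [hw]; exact hb
  exact inner_self_eq_zero.mp this
end

section
/- Let R be an algebraic curvature tensor on V = Σ ⊕ Σ^⊥ such that R(z,u)z = 0 for all z ∈ Σ, u ∈ Σ^⊥ (mixed planes are flat in the strong sense). Then for all u, v ∈ Σ^⊥ and x ∈ Σ one has R(u,v)x = 2R(u,x)v. -/
open scoped RealInnerProductSpace

/-! Nonnegative sectional curvature makes `t ↦ ⟪R(z + t y, w) w, z + t y⟫` a nonnegative quadratic
whose constant term vanishes when `R(z, w) z = 0`, so its linear term `2 ⟪R(z, w) w, y⟫` vanishes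
too; hence `R(z, w) w = 0` for all `z ∈ Σ`, `w ∈ Σᗮ`. Polarizing in `w` makes `R(x, ·) ·`
alternating on `Σᗮ`, and the Bianchi identity turns this into `R(u, v) x = 2 R(u, x) v`. -/

lemma LinearMap.apply_swap_eq_neg_of_apply_self_eq_zero {R M N : Type*} [CommSemiring R]
    [AddCommGroup M] [Module R M] [AddCommGroup N] [Module R N] (f : M →ₗ[R] M →ₗ[R] N)
    (S : Submodule R M) (hf : ∀ w ∈ S, f w w = 0) {u v : M} (hu : u ∈ S) (hv : v ∈ S) :
    f v u = -f u v := by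
  have h := hf (u + v) (S.add_mem hu hv)
  simp only [map_add, LinearMap.add_apply, hf u hu, hf v hv, zero_add, add_zero] at h
  exact eq_neg_of_add_eq_zero_left h

section CurvatureTensor

variable {V : Type*} [NormedAddCommGroup V] [InnerProductSpace ℝ V]
  (R : V →ₗ[ℝ] V →ₗ[ℝ] V →ₗ[ℝ] V)

lemma inner_apply_apply_self_comm (hanti2 : ∀ x y z w, ⟪R x y z, w⟫ = - ⟪R x y w, z⟫)
    (hpair : ∀ x y z w, ⟪R x y z, w⟫ = ⟪R z w x, y⟫) (y z w : V) :
    ⟪R y w w, z⟫ = ⟪R z w w, y⟫ := by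
  rw [hpair y w w z, hanti2 w z y w, hpair w z w y, hanti2 w y w z, ← hpair z w w y, neg_neg]

lemma apply_apply_self_eq_zero_of_flat (hanti2 : ∀ x y z w, ⟪R x y z, w⟫ = - ⟪R x y w, z⟫)
    (hpair : ∀ x y z w, ⟪R x y z, w⟫ = ⟪R z w x, y⟫) (hnonneg : ∀ x y, 0 ≤ ⟪R x y y, x⟫)
    {z w : V} (h : R z w z = 0) : R z w w = 0 := by
  suffices ∀ y, ⟪R z w w, y⟫ = 0 from inner_self_eq_zero.mp (this _)
  intro y
  have hz : ⟪R z w w, z⟫ = 0 := by rw [hanti2, h, inner_zero_left, neg_zero]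
  have hquad : ∀ t : ℝ, 0 ≤ ⟪R y w w, y⟫ * (t * t) + 2 * ⟪R z w w, y⟫ * t + 0 := by
    intro t
    convert hnonneg (z + t • y) w using 1
    simp only [map_add, map_smul, LinearMap.add_apply, LinearMap.smul_apply, inner_add_left,
      inner_add_right, real_inner_smul_left, real_inner_smul_right, hz,
      inner_apply_apply_self_comm R hanti2 hpair y z w]
    ring
  have hdisc := discrim_le_zero hquad
  rw [discrim] at hdisc
  nlinarith [sq_nonneg ⟪R z w w, y⟫]

end CurvatureTensor

theorem stmt6_general {V : Type*} [NormedAddCommGroup V] [InnerProductSpace ℝ V] (Sig : Submodule ℝ V)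
    (R : V →ₗ[ℝ] V →ₗ[ℝ] V →ₗ[ℝ] V)
    (hanti1 : ∀ x y, R x y = - R y x)
    (hanti2 : ∀ x y z w, ⟪R x y z, w⟫ = - ⟪R x y w, z⟫)
    (hpair : ∀ x y z w, ⟪R x y z, w⟫ = ⟪R z w x, y⟫)
    (hbianchi : ∀ x y z, R x y z + R y z x + R z x y = 0)
    (hnonneg : ∀ x y, 0 ≤ ⟪R x y y, x⟫)
    (hflat : ∀ z ∈ Sig, ∀ u ∈ Sigᗮ, R z u z = 0)
    (u : V) (hu : u ∈ Sigᗮ) (v : V) (hv : v ∈ Sigᗮ) (x : V) (hx : x ∈ Sig) :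
    R u v x = (2 : ℝ) • R u x v := by
  have hjacobi : ∀ w ∈ Sigᗮ, R x w w = 0 := fun w hw =>
    apply_apply_self_eq_zero_of_flat R hanti2 hpair hnonneg (hflat x hx w hw)
  have hswap : R x v u = -R x u v :=
    (R x).apply_swap_eq_neg_of_apply_self_eq_zero Sigᗮ hjacobi hu hv
  have hux : R u x v = -R x u v := by rw [hanti1 u x, LinearMap.neg_apply]
  have hvx : R v x u = R x u v := by rw [hanti1 v x, LinearMap.neg_apply, hswap, neg_neg]
  have hb := hbianchi u v x
  rw [hvx] at hb
  rw [hux, smul_neg, two_smul]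
  exact eq_neg_of_add_eq_zero_left (by rwa [add_assoc] at hb)

/-- For an algebraic curvature tensor on V = Σ ⊕ Σᗮ with R z u z = 0 for z ∈ Σ, u ∈ Σᗮ,
one has R(u,v)x = 2 R(u,x)v for u, v ∈ Σᗮ and x ∈ Σ. -/
theorem stmt6 {V : Type*} [NormedAddCommGroup V] [InnerProductSpace ℝ V] [FiniteDimensional ℝ V] (Sig : Submodule ℝ V)
    (R : V →ₗ[ℝ] V →ₗ[ℝ] V →ₗ[ℝ] V)
    (hanti1 : ∀ x y, R x y = - R y x)
    (hanti2 : ∀ x y z w, ⟪R x y z, w⟫ = - ⟪R x y w, z⟫)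
    (hpair : ∀ x y z w, ⟪R x y z, w⟫ = ⟪R z w x, y⟫)
    (hbianchi : ∀ x y z, R x y z + R y z x + R z x y = 0)
    (hnonneg : ∀ x y, 0 ≤ ⟪R x y y, x⟫)
    (hflat : ∀ z ∈ Sig, ∀ u ∈ Sigᗮ, R z u z = 0)
    (u : V) (hu : u ∈ Sigᗮ) (v : V) (hv : v ∈ Sigᗮ) (x : V) (hx : x ∈ Sig) :
    R u v x = (2 : ℝ) • R u x v :=
  stmt6_general Sig R hanti1 hanti2 hpair hbianchi hnonneg hflat u hu v hv x hx
end

section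
/- Let R be an algebraic curvature tensor with nonnegative sectional curvature on V = Σ ⊕ Σ^⊥, with R(z,u)z = 0 for all z ∈ Σ, u ∈ Σ^⊥. Then for all x, y ∈ Σ and u, v ∈ Σ^⊥: ⟨R(x,y)y,x⟩ · ⟨R(u,v)v,u⟩ ≥ (9/4) · ⟨R(x,y)u,v⟩². -/
open scoped RealInnerProductSpace

/-- For an algebraic curvature tensor on V = Σ ⊕ Σᗮ with nonnegative sectional curvature
and flat mixed planes, ⟪R(x,y)y,x⟫ ⟪R(u,v)v,u⟫ ≥ (9/4) ⟪R(x,y)u,v⟫² for x, y ∈ Σ,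
u, v ∈ Σᗮ. -/
theorem stmt7 {V : Type*} [NormedAddCommGroup V] [InnerProductSpace ℝ V] [FiniteDimensional ℝ V] (Sig : Submodule ℝ V)
    (R : V →ₗ[ℝ] V →ₗ[ℝ] V →ₗ[ℝ] V)
    (hanti1 : ∀ x y, R x y = - R y x)
    (hanti2 : ∀ x y z w, ⟪R x y z, w⟫ = - ⟪R x y w, z⟫)
    (hpair : ∀ x y z w, ⟪R x y z, w⟫ = ⟪R z w x, y⟫)
    (hbianchi : ∀ x y z, R x y z + R y z x + R z x y = 0)
    (hnonneg : ∀ x y, 0 ≤ ⟪R x y y, x⟫)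
    (hflat : ∀ z ∈ Sig, ∀ u ∈ Sigᗮ, R z u z = 0)
    (x : V) (hx : x ∈ Sig) (y : V) (hy : y ∈ Sig)
    (u : V) (hu : u ∈ Sigᗮ) (v : V) (hv : v ∈ Sigᗮ) :
    (9 / 4 : ℝ) * ⟪R x y u, v⟫ ^ 2 ≤ ⟪R x y y, x⟫ * ⟪R u v v, u⟫ := by
  -- basic flatness facts
  have hxu : R x u x = 0 := hflat x hx u hu
  have hyu : R y u y = 0 := hflat y hy u hu
  have hxv : R x v x = 0 := hflat x hx v hv
  have hyv : R y v y = 0 := hflat y hy v hv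
  -- polarization in the Σ-variable
  have hpolv : R x v y + R y v x = 0 := by
    have h := hflat (x + y) (Sig.add_mem hx hy) v hv
    simp only [map_add, LinearMap.add_apply, hxv, hyv, zero_add, add_zero] at h
    linear_combination (norm := abel) h
  -- Bianchi consequence: R x y v = 2 R x v y
  have hE : R x y v = (2 : ℝ) • R x v y := by
    have hb := hbianchi x y v
    have h2 : R v x y = - R x v y := by rw [hanti1 v x]; simp
    have h1 : R y v x = - R x v y := by linear_combination (norm := abel) hpolv
    rw [h1, h2] at hb
    have : R x y v = R x v y + R x v y := by linear_combination (norm := abel) hb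
    rw [this, two_smul]
  -- scalar identities for the 16 expansion terms
  have hA : ⟪R x y y, u⟫ = 0 := by
    rw [hpair x y y u, hanti2 y u x y, hyu]; simp
  have hB : ⟪R x y v, x⟫ = 0 := by
    rw [hanti2 x y v x, hpair x y x v, hxv]; simp
  have hC : ⟪R x y v, u⟫ = -⟪R x y u, v⟫ := hanti2 x y v u
  have hD : ⟪R x v y, x⟫ = 0 := by
    rw [hanti2 x v y x, hxv]; simp
  have hEi : ⟪R x v y, u⟫ = -(1/2) * ⟪R x y u, v⟫ := by
    have h : ⟪R x y v, u⟫ = 2 * ⟪R x v y, u⟫ := by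
      rw [hE, real_inner_smul_left]
    rw [hC] at h; linarith
  have hF : ⟪R x v v, x⟫ = 0 := by
    rw [hanti2 x v v x, hxv]; simp
  have hG : ⟪R u y y, x⟫ = 0 := by
    rw [hanti1 u y]; simp [hyu]
  have hH : ⟪R u y y, u⟫ = 0 := by
    rw [hanti1 u y]; simp [hyu]
  have hI : ⟪R u y v, x⟫ = -(1/2) * ⟪R x y u, v⟫ := by
    rw [hpair u y v x, hanti1 v x]
    simp only [LinearMap.neg_apply, inner_neg_left]
    rw [hanti2 x v u y, hEi]; ring
  have hJ : ⟪R u v y, x⟫ = -⟪R x y u, v⟫ := by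
    rw [hpair u v y x, hanti1 y x]; simp
  -- the quadratic in p is nonnegative
  have hq : ∀ p : ℝ, 0 ≤ ⟪R u v v, u⟫ * (p * p) + (-(3 * ⟪R x y u, v⟫)) * p + ⟪R x y y, x⟫ := by
    intro p
    have h1 := hnonneg (x + p • u) (y + v)
    have h2 := hnonneg (x - p • u) (y - v)
    simp only [map_add, map_sub, map_smul, LinearMap.add_apply, LinearMap.sub_apply,
      LinearMap.smul_apply, inner_add_left, inner_add_right, inner_sub_left, inner_sub_right,
      real_inner_smul_left, real_inner_smul_right, smul_eq_mul,
      hA, hB, hC, hD, hEi, hF, hG, hH, hI, hJ] at h1 h2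
    linarith [h1, h2]
  have hd := discrim_le_zero hq
  rw [discrim] at hd
  linarith [hd]
end

section
/- For vectors e = αx + βu, f = γy + δv in V = Σ ⊕ Σ^⊥ with x, y ∈ Σ, u, v ∈ Σ^⊥, and R an algebraic curvature tensor with R(z,w)z = 0 for all z ∈ Σ, w ∈ Σ^⊥, one has the expansion ⟨R(e,f)f,e⟩ = (αγ)² ⟨R(x,y)y,x⟩ + 3αβγδ ⟨R(x,y)v,u⟩ + (βδ)² ⟨R(u,v)v,u⟩. -/
open scoped RealInnerProductSpace

lemma aux_quad {A B : ℝ} (hA : 0 ≤ A) (h : ∀ t : ℝ, 0 ≤ 2*B*t + A*t^2) : B = 0 := by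
  by_contra hB
  have hA1 : (0:ℝ) < A + 1 := by linarith
  have h1 := h (-(B/(A+1)))
  have key : 2*B*(-(B/(A+1))) + A*(-(B/(A+1)))^2 = -(B^2*(A+2))/(A+1)^2 := by
    field_simp; ring
  rw [key] at h1
  have hB2 : 0 < B^2 := by positivity
  have h2 : (0:ℝ) ≤ -(B^2*(A+2)) := by
    have := (div_nonneg_iff.mp h1)
    rcases this with ⟨h3, _⟩ | ⟨_, h4⟩
    · exact h3
    · nlinarith [mul_pos hA1 hA1]
  nlinarith


/-- Expansion of ⟪R(e,f)f,e⟫ for e = αx + βu, f = γy + δv with x, y ∈ Σ and u, v ∈ Σᗮ,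
for an algebraic curvature tensor with nonnegative sectional curvature and flat mixed
planes. -/
theorem stmt8 {V : Type*} [NormedAddCommGroup V] [InnerProductSpace ℝ V] [FiniteDimensional ℝ V] (Sig : Submodule ℝ V)
    (R : V →ₗ[ℝ] V →ₗ[ℝ] V →ₗ[ℝ] V)
    (hanti1 : ∀ x y, R x y = - R y x)
    (hanti2 : ∀ x y z w, ⟪R x y z, w⟫ = - ⟪R x y w, z⟫)
    (hpair : ∀ x y z w, ⟪R x y z, w⟫ = ⟪R z w x, y⟫)
    (hbianchi : ∀ x y z, R x y z + R y z x + R z x y = 0)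
    (hnonneg : ∀ x y, 0 ≤ ⟪R x y y, x⟫)
    (hflat : ∀ z ∈ Sig, ∀ w ∈ Sigᗮ, R z w z = 0)
    (x : V) (hx : x ∈ Sig) (y : V) (hy : y ∈ Sig)
    (u : V) (hu : u ∈ Sigᗮ) (v : V) (hv : v ∈ Sigᗮ)
    (α β γ δ : ℝ) :
    ⟪R (α • x + β • u) (γ • y + δ • v) (γ • y + δ • v), α • x + β • u⟫ =
      (α * γ) ^ 2 * ⟪R x y y, x⟫ + 3 * α * β * γ * δ * ⟪R x y v, u⟫ +
        (β * δ) ^ 2 * ⟪R u v v, u⟫ := by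
  -- basic scalar facts
  have hzero3 : ∀ a b c : V, ⟪R a b c, c⟫ = 0 := by
    intro a b c; have := hanti2 a b c c; linarith
  have hanti1s : ∀ a b c d : V, ⟪R a b c, d⟫ = -⟪R b a c, d⟫ := by
    intro a b c d; rw [hanti1 a b]; simp
  have hbianchiS : ∀ a b c d : V, ⟪R a b c, d⟫ + ⟪R b c a, d⟫ + ⟪R c a b, d⟫ = 0 := by
    intro a b c d
    have h := congrArg (fun z => ⟪z, d⟫) (hbianchi a b c)
    simpa [inner_add_left] using h
  have flat1 : ∀ z ∈ Sig, ∀ w ∈ Sigᗮ, ∀ a : V, ⟪R z w z, a⟫ = 0 := by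
    intro z hz w hw a; rw [hflat z hz w hw]; simp
  -- the symmetry ⟪R a w w, z⟫ = ⟪R z w w, a⟫
  have hsym : ∀ a z w : V, ⟪R a w w, z⟫ = ⟪R z w w, a⟫ := by
    intro a z w
    have h1 := hpair a w w z
    have h2 := hanti1s w z a w
    have h3 := hanti2 z w a w
    linarith
  -- Flatness in the second slot: ⟪R z w w, a⟫ = 0
  have F2s : ∀ z ∈ Sig, ∀ w ∈ Sigᗮ, ∀ a : V, ⟪R z w w, a⟫ = 0 := by
    intro z hz w hw a
    have hA : 0 ≤ ⟪R a w w, a⟫ := hnonneg a w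
    apply aux_quad hA
    intro t
    have h := hnonneg (z + t • a) w
    have h0 : ⟪R z w w, z⟫ = 0 := by
      have := hanti2 z w w z
      have := flat1 z hz w hw w
      linarith
    simp only [map_add, map_smul, LinearMap.add_apply, LinearMap.smul_apply,
      inner_add_left, inner_add_right, real_inner_smul_left, real_inner_smul_right] at h
    rw [h0, hsym a z w] at h
    nlinarith [h]
  have flat3 : ∀ z ∈ Sig, ∀ w ∈ Sigᗮ, ∀ a : V, ⟪R w z w, a⟫ = 0 := by
    intro z hz w hw a
    have h := hanti1s w z w a
    rw [F2s z hz w hw a] at h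
    linarith
  -- polarization in Σ
  have P1 : ∀ p ∈ Sig, ∀ q ∈ Sig, ∀ w ∈ Sigᗮ, ∀ a : V,
      ⟪R p w q, a⟫ + ⟪R q w p, a⟫ = 0 := by
    intro p hp q hq w hw a
    have hv0 := hflat (p + q) (Sig.add_mem hp hq) w hw
    have h : ⟪R (p + q) w (p + q), a⟫ = 0 := by rw [hv0]; simp
    simp only [map_add, LinearMap.add_apply, inner_add_left] at h
    rw [flat1 p hp w hw a, flat1 q hq w hw a] at h
    linarith
  -- polarization in Σ⊥
  have P2 : ∀ p ∈ Sigᗮ, ∀ q ∈ Sigᗮ, ∀ z ∈ Sig, ∀ a : V,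
      ⟪R p z q, a⟫ + ⟪R q z p, a⟫ = 0 := by
    intro p hp q hq z hz a
    have h := flat3 z hz (p + q) (Sigᗮ.add_mem hp hq) a
    simp only [map_add, LinearMap.add_apply, inner_add_left] at h
    rw [flat3 z hz p hp a, flat3 z hz q hq a] at h
    linarith
  set T := ⟪R x y v, u⟫ with hT
  -- individual term facts
  have h2 : ⟪R x y y, u⟫ = 0 := by
    have e1 := hpair x y y u
    have e2 := P1 y hy x hx u hu y
    have e3 := hzero3 x u y
    linarith
  have h3 : ⟪R x y v, x⟫ = 0 := by
    have e1 := hpair x y v x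
    have e2 := hanti1s v x x y
    have e3 := flat1 x hx v hv y
    linarith
  have h5 : ⟪R x v y, x⟫ = 0 := by
    have e1 := hanti2 x v y x
    have e2 := flat1 x hx v hv y
    linarith
  have h7 : ⟪R x v v, x⟫ = 0 := F2s x hx v hv x
  have h8 : ⟪R x v v, u⟫ = 0 := F2s x hx v hv u
  have h9 : ⟪R u y y, x⟫ = 0 := by
    have e1 := hpair u y y x
    have e2 := hanti2 y x u y
    have e3 := hpair y x y u
    have e4 := flat1 y hy u hu x
    linarith
  have h10 : ⟪R u y y, u⟫ = 0 := by
    have e1 := hpair u y y u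
    have e2 := F2s y hy u hu y
    linarith
  have h12 : ⟪R u y v, u⟫ = 0 := by
    have e1 := P2 u hu v hv y hy u
    have e2 := hzero3 v y u
    linarith
  have h14 : ⟪R u v y, u⟫ = 0 := by
    have e1 := hbianchiS u v y u
    have e2 := hzero3 v y u
    have e3 := hanti2 y u v u
    have e4 := F2s y hy u hu v
    linarith
  have h15 : ⟪R u v v, x⟫ = 0 := by
    have e1 := hpair u v v x
    have e2 := hanti2 v x u v
    have e3 := flat3 x hx v hv u
    linarith
  have h6 : 2 * ⟪R x v y, u⟫ = T := by
    have e1 := hbianchiS x y v u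
    have e2 := P1 y hy x hx v hv u
    have e3 := hanti1s v x y u
    rw [hT]; linarith
  have h11 : 2 * ⟪R u y v, x⟫ = T := by
    have e1 := hpair u y v x
    have e2 := P2 v hv u hu x hx y
    have e3 := hbianchiS u v x y
    have e4 := hanti1s x u v y
    have e5 := hpair u v x y
    have e6 := hanti2 x y u v
    rw [hT]; linarith
  have h13 : ⟪R u v y, x⟫ = T := by
    have e1 := hbianchiS u v y x
    have e2 := P2 v hv u hu y hy x
    have e3 := hanti1s y u v x
    rw [hT]; linarith
  simp only [map_add, map_smul, LinearMap.add_apply, LinearMap.smul_apply,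
    inner_add_left, inner_add_right, real_inner_smul_left, real_inner_smul_right]
  linear_combination (α*γ^2*β) * h2 + (α^2*γ*δ) * h3 + (α^2*γ*δ) * h5 + (α^2*δ^2) * h7 +
    (α*β*δ^2) * h8 + (α*β*γ^2) * h9 + (β^2*γ^2) * h10 + (β^2*γ*δ) * h12 +
    (β^2*γ*δ) * h14 + (α*β*δ^2) * h15 + (α*β*γ*δ/2) * h6 + (α*β*γ*δ/2) * h11 +
    (α*β*γ*δ) * h13
end

section
/- Let R be an algebraic curvature tensor on V = Σ ⊕ Σ^⊥ with nonnegative sectional curvature and R(z,u)z = 0 for all z ∈ Σ, u ∈ Σ^⊥. Suppose there exist x, y ∈ Σ and u ∈ Σ^⊥ with R(x,y)u ≠ 0. Then, with v the unit vector in direction R(x,y)u and α = |R(x,y)u| > 0, the curvature operator ρ on Λ²V satisfies ⟨ρ(x∧u + y∧v), x∧u + y∧v⟩ = -α. -/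
open scoped RealInnerProductSpace

/-- Setting: V = Σ ⊕ Σᗮ, algebraic curvature tensor R with nonnegative sectional
curvature and flat mixed planes; Λ models Λ²V via the bilinear map ω (wedge) with the
induced inner product on decomposables, and ρ is the (self-adjoint) curvature operator,
⟪ρ(x∧y), z∧w⟫ = ⟪R(x,y)w, z⟫.  If x, y ∈ Σ are orthonormal, u ∈ Σᗮ is a unit vector
with R(x,y)u ≠ 0 (and R(x,y)u ∈ Σᗮ), and v is the unit vector in the direction of
R(x,y)u, then ⟪ρ(x∧u + y∧v), x∧u + y∧v⟫ = -‖R(x,y)u‖. -/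
theorem stmt10 {V : Type*} [NormedAddCommGroup V] [InnerProductSpace ℝ V] [FiniteDimensional ℝ V] (Sig : Submodule ℝ V)
    (R : V →ₗ[ℝ] V →ₗ[ℝ] V →ₗ[ℝ] V)
    (hanti1 : ∀ x y, R x y = - R y x)
    (hanti2 : ∀ x y z w, ⟪R x y z, w⟫ = - ⟪R x y w, z⟫)
    (hpair : ∀ x y z w, ⟪R x y z, w⟫ = ⟪R z w x, y⟫)
    (hbianchi : ∀ x y z, R x y z + R y z x + R z x y = 0)
    (hnonneg : ∀ x y, 0 ≤ ⟪R x y y, x⟫)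
    (hflat : ∀ z ∈ Sig, ∀ u ∈ Sigᗮ, R z u z = 0)
    {Λ : Type*} [NormedAddCommGroup Λ] [InnerProductSpace ℝ Λ]
    (ω : V →ₗ[ℝ] V →ₗ[ℝ] Λ)
    (hωinner : ∀ x y z w : V, ⟪ω x y, ω z w⟫ = ⟪x, z⟫ * ⟪y, w⟫ - ⟪x, w⟫ * ⟪y, z⟫)
    (ρ : Λ →ₗ[ℝ] Λ) (hρsym : ρ.IsSymmetric)
    (hρ : ∀ x y z w : V, ⟪ρ (ω x y), ω z w⟫ = ⟪R x y w, z⟫)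
    (x : V) (hx : x ∈ Sig) (y : V) (hy : y ∈ Sig)
    (hxy : Orthonormal ℝ (![x, y]))
    (u : V) (hu : u ∈ Sigᗮ) (hu1 : ‖u‖ = 1)
    (hR0 : R x y u ≠ 0) (hRperp : R x y u ∈ Sigᗮ)
    (v : V) (hv : v = ‖R x y u‖⁻¹ • R x y u) :
    ⟪ρ (ω x u + ω y v), ω x u + ω y v⟫ = -‖R x y u‖ := by
  have hvperp : v ∈ Sigᗮ := hv ▸ Submodule.smul_mem _ _ hRperp
  have hα : 0 < ‖R x y u‖ := norm_pos_iff.mpr hR0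
  -- polarized flatness
  have hflat' : ∀ z ∈ Sig, ∀ z' ∈ Sig, ∀ w ∈ Sigᗮ, R z w z' = - R z' w z := by
    intro z hz z' hz' w hw
    have h := hflat (z + z') (Sig.add_mem hz hz') w hw
    simp only [map_add, LinearMap.add_apply] at h
    rw [hflat z hz w hw, hflat z' hz' w hw] at h
    apply eq_neg_of_add_eq_zero_left
    rw [← h]; abel
  have h2 : R u x y = - R x u y := by rw [hanti1 u x]; simp
  have hkey : R x y u = R x u y + R x u y := by
    have hb := hbianchi x y u
    rw [hflat' y hy x hx u hu, h2] at hb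
    apply eq_of_sub_eq_zero
    rw [← hb]; abel
  have hwv : ⟪R x y u, v⟫ = ‖R x y u‖ := by
    rw [hv, real_inner_smul_right, real_inner_self_eq_norm_sq, sq]
    field_simp
  have hhalf : ⟪R x u y, v⟫ = ‖R x y u‖ / 2 := by
    have h : ⟪R x u y, v⟫ + ⟪R x u y, v⟫ = ‖R x y u‖ := by
      rw [← inner_add_left, ← hkey, hwv]
    linarith
  have t1 : ⟪ρ (ω x u), ω x u⟫ = 0 := by
    rw [hρ, hanti2 x u u x, hflat x hx u hu, inner_zero_left, neg_zero]
  have t4 : ⟪ρ (ω y v), ω y v⟫ = 0 := by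
    rw [hρ, hanti2 y v v y, hflat y hy v hvperp, inner_zero_left, neg_zero]
  have t2 : ⟪ρ (ω x u), ω y v⟫ = -(‖R x y u‖ / 2) := by
    rw [hρ, hanti2 x u v y, hhalf]
  have t3 : ⟪ρ (ω y v), ω x u⟫ = -(‖R x y u‖ / 2) := by
    rw [hρ, hpair y v u x, h2, inner_neg_left, hhalf]
  rw [map_add, inner_add_left, inner_add_right, inner_add_right, t1, t2, t3, t4]
  ring
end

section
/- In the setting of the previous statement, the three bivectors ξ₁' = x∧u + y∧v, ξ₂' = x∧v - y∧u, ξ₃' = x∧v + y∧u are mutually orthogonal, each of norm √2, and ⟨ρ ξ₁', ξ₁'⟩ + ⟨ρ ξ₂', ξ₂'⟩ + ⟨ρ ξ₃', ξ₃'⟩ = -α < 0. Consequently, the curvature operator ρ is not 3-nonnegative. -/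
open scoped RealInnerProductSpace

/-!
Write `Q ξ = ⟪ρ ξ, ξ⟫`. For `x, y ∈ Σ` and `a, b ∈ Σᗮ` the flatness `R(z,w)z = 0` kills the
diagonal terms of `Q (x∧a + y∧b)`, leaving `Q (x∧a + y∧b) = 2⟪R(x,a)b, y⟫`. Polarizing the
flatness and applying the first Bianchi identity gives `2⟪R(x,a)b, y⟫ = -⟪R(x,y)a, b⟫`.
Since `ξ₂' = x∧v + y∧(-u)`, the contributions of `ξ₂'` and `ξ₃'` cancel and the sum is
`2⟪R(x,u)v, y⟫ = -⟪R(x,y)u, v⟫ = -α`. Dividing the three bivectors by `√2` gives an orthonormal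
triple on which the sum is `-α/2 < 0`.
-/

section Curvature

variable {V : Type*} [NormedAddCommGroup V] [InnerProductSpace ℝ V]
  {R : V →ₗ[ℝ] V →ₗ[ℝ] V →ₗ[ℝ] V} {Sig : Submodule ℝ V}

theorem curvature_swap_of_flat (hflat : ∀ z ∈ Sig, ∀ u ∈ Sigᗮ, R z u z = 0)
    {z z' w : V} (hz : z ∈ Sig) (hz' : z' ∈ Sig) (hw : w ∈ Sigᗮ) :
    R z w z' = -R z' w z := by
  have h := hflat (z + z') (Sig.add_mem hz hz') w hw
  simp only [map_add, LinearMap.add_apply, hflat z hz w hw, hflat z' hz' w hw, zero_add,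
    add_zero] at h
  exact eq_neg_of_add_eq_zero_left (by rwa [add_comm] at h)

theorem inner_curvature_self_eq_zero_of_flat (hanti1 : ∀ x y, R x y = -R y x)
    (hpair : ∀ x y z w, ⟪R x y z, w⟫ = ⟪R z w x, y⟫)
    (hflat : ∀ z ∈ Sig, ∀ u ∈ Sigᗮ, R z u z = 0)
    ⦃z w : V⦄ (hz : z ∈ Sig) (hw : w ∈ Sigᗮ) : ⟪R z w w, z⟫ = 0 := by
  rw [hpair, hanti1 w z, LinearMap.neg_apply, hflat z hz w hw, neg_zero, inner_zero_left]

theorem two_mul_inner_curvature_of_flat (hanti1 : ∀ x y, R x y = -R y x)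
    (hanti2 : ∀ x y z w, ⟪R x y z, w⟫ = -⟪R x y w, z⟫)
    (hpair : ∀ x y z w, ⟪R x y z, w⟫ = ⟪R z w x, y⟫)
    (hbianchi : ∀ x y z, R x y z + R y z x + R z x y = 0)
    (hflat : ∀ z ∈ Sig, ∀ u ∈ Sigᗮ, R z u z = 0)
    {x y a b : V} (hx : x ∈ Sig) (hy : y ∈ Sig) (hb : b ∈ Sigᗮ) :
    2 * ⟪R x a b, y⟫ = -⟪R x y a, b⟫ := by
  have hcycle : ⟪R x a b, y⟫ + ⟪R a b x, y⟫ + ⟪R b x a, y⟫ = 0 := by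
    rw [← inner_add_left, ← inner_add_left, hbianchi, inner_zero_left]
  have hthird : ⟪R b x a, y⟫ = ⟪R x a b, y⟫ := by
    rw [hanti1 b x, LinearMap.neg_apply, inner_neg_left, hanti2 x b a y, neg_neg,
      curvature_swap_of_flat hflat hx hy hb, inner_neg_left, hpair y b x a, hanti2 x a y b,
      neg_neg]
  rw [hpair a b x y] at hcycle
  linarith

end Curvature

section Bivectors

variable {V Λ : Type*} [NormedAddCommGroup V] [InnerProductSpace ℝ V]
  [NormedAddCommGroup Λ] [InnerProductSpace ℝ Λ] {ω : V →ₗ[ℝ] V →ₗ[ℝ] Λ} {Sig : Submodule ℝ V}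
  {x y : V}

theorem inner_wedge_add_wedge
    (hω : ∀ x y z w : V, ⟪ω x y, ω z w⟫ = ⟪x, z⟫ * ⟪y, w⟫ - ⟪x, w⟫ * ⟪y, z⟫)
    (hx : x ∈ Sig) (hy : y ∈ Sig) (hxy : Orthonormal ℝ ![x, y])
    ⦃a b : V⦄ (ha : a ∈ Sigᗮ) (hb : b ∈ Sigᗮ) (c d : V) :
    ⟪ω x a + ω y b, ω x c + ω y d⟫ = ⟪a, c⟫ + ⟪b, d⟫ := by
  have hxx : ⟪x, x⟫ = 1 := by simpa using hxy.inner_right_fintype (Pi.single 0 1) 0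
  have hyy : ⟪y, y⟫ = 1 := by simpa using hxy.inner_right_fintype (Pi.single 1 1) 1
  have hxy' : ⟪x, y⟫ = 0 := by simpa using hxy.2 (show (0 : Fin 2) ≠ 1 by decide)
  have hperp : ∀ z ∈ Sig, ∀ w ∈ Sigᗮ, ⟪w, z⟫ = 0 := fun z hz w hw =>
    Submodule.inner_left_of_mem_orthogonal hz hw
  simp only [inner_add_left, inner_add_right, hω, hxx, hyy, hxy', real_inner_comm x y,
    hperp x hx, hperp y hy, ha, hb]
  ring

theorem inner_map_wedge_add_wedge {R : V →ₗ[ℝ] V →ₗ[ℝ] V →ₗ[ℝ] V}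
    (hanti1 : ∀ x y, R x y = -R y x)
    (hanti2 : ∀ x y z w, ⟪R x y z, w⟫ = -⟪R x y w, z⟫)
    (hpair : ∀ x y z w, ⟪R x y z, w⟫ = ⟪R z w x, y⟫)
    (hflat : ∀ z ∈ Sig, ∀ u ∈ Sigᗮ, R z u z = 0)
    {ρ : Λ →ₗ[ℝ] Λ} (hρ : ∀ x y z w : V, ⟪ρ (ω x y), ω z w⟫ = ⟪R x y w, z⟫)
    (hx : x ∈ Sig) (hy : y ∈ Sig) ⦃a b : V⦄ (ha : a ∈ Sigᗮ) (hb : b ∈ Sigᗮ) :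
    ⟪ρ (ω x a + ω y b), ω x a + ω y b⟫ = 2 * ⟪R x a b, y⟫ := by
  have hdiag := inner_curvature_self_eq_zero_of_flat hanti1 hpair hflat
  have hsymm : ⟪R y b a, x⟫ = ⟪R x a b, y⟫ := by
    rw [hpair, hanti1 a x, LinearMap.neg_apply, inner_neg_left, hanti2, neg_neg]
  rw [map_add, inner_add_left, inner_add_right, inner_add_right, hρ, hρ, hρ, hρ,
    hdiag hx ha, hdiag hy hb, hsymm]
  ring

end Bivectors

theorem exists_orthonormal_sum_inner_map_neg {Λ ι : Type*} [NormedAddCommGroup Λ]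
    [InnerProductSpace ℝ Λ] [Fintype ι] (ρ : Λ →ₗ[ℝ] Λ) {ξ : ι → Λ} {r : ℝ} (hr : r ≠ 0)
    (hnorm : ∀ i, ‖ξ i‖ = r) (horth : Pairwise fun i j => ⟪ξ i, ξ j⟫ = 0)
    (hneg : ∑ i, ⟪ρ (ξ i), ξ i⟫ < 0) :
    ∃ η : ι → Λ, Orthonormal ℝ η ∧ ∑ i, ⟪ρ (η i), η i⟫ < 0 := by
  refine ⟨fun i => r⁻¹ • ξ i, ⟨fun i => ?_, fun i j hij => ?_⟩, ?_⟩
  · rw [norm_smul, hnorm, norm_inv, Real.norm_eq_abs, ← hnorm i, abs_norm,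
      inv_mul_cancel₀ (hnorm i ▸ hr)]
  · simp only [real_inner_smul_left, real_inner_smul_right, horth hij, mul_zero]
  · simp only [map_smul, real_inner_smul_left, real_inner_smul_right, ← mul_assoc,
      ← Finset.mul_sum]
    exact mul_neg_of_pos_of_neg (mul_self_pos.mpr (inv_ne_zero hr)) hneg

theorem exists_orthonormal_triple_sum_inner_map_neg {Λ : Type*} [NormedAddCommGroup Λ]
    [InnerProductSpace ℝ Λ] (ρ : Λ →ₗ[ℝ] Λ) {a b c : Λ} {r : ℝ} (hr : r ≠ 0)
    (ha : ‖a‖ = r) (hb : ‖b‖ = r) (hc : ‖c‖ = r)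
    (hab : ⟪a, b⟫ = 0) (hac : ⟪a, c⟫ = 0) (hbc : ⟪b, c⟫ = 0)
    (hneg : ⟪ρ a, a⟫ + ⟪ρ b, b⟫ + ⟪ρ c, c⟫ < 0) :
    ∃ η : Fin 3 → Λ, Orthonormal ℝ η ∧ ∑ i, ⟪ρ (η i), η i⟫ < 0 := by
  refine exists_orthonormal_sum_inner_map_neg ρ (ξ := ![a, b, c]) hr
    (by simp [Fin.forall_fin_succ, ha, hb, hc]) (fun i j hij => ?_)
    (by simpa only [Fin.sum_univ_three, Matrix.cons_val_zero, Matrix.cons_val_one,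
      Matrix.cons_val_two, Matrix.head_cons, Matrix.tail_cons] using hneg)
  fin_cases i <;> fin_cases j <;> simp at hij ⊢ <;>
    first | assumption | exact inner_eq_zero_symm.mp ‹_›

theorem stmt11_general {V : Type*} [NormedAddCommGroup V] [InnerProductSpace ℝ V] (Sig : Submodule ℝ V)
    (R : V →ₗ[ℝ] V →ₗ[ℝ] V →ₗ[ℝ] V)
    (hanti1 : ∀ x y, R x y = - R y x)
    (hanti2 : ∀ x y z w, ⟪R x y z, w⟫ = - ⟪R x y w, z⟫)
    (hpair : ∀ x y z w, ⟪R x y z, w⟫ = ⟪R z w x, y⟫)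
    (hbianchi : ∀ x y z, R x y z + R y z x + R z x y = 0)
    (hflat : ∀ z ∈ Sig, ∀ u ∈ Sigᗮ, R z u z = 0)
    {Λ : Type*} [NormedAddCommGroup Λ] [InnerProductSpace ℝ Λ]
    (ω : V →ₗ[ℝ] V →ₗ[ℝ] Λ)
    (hωinner : ∀ x y z w : V, ⟪ω x y, ω z w⟫ = ⟪x, z⟫ * ⟪y, w⟫ - ⟪x, w⟫ * ⟪y, z⟫)
    (ρ : Λ →ₗ[ℝ] Λ)
    (hρ : ∀ x y z w : V, ⟪ρ (ω x y), ω z w⟫ = ⟪R x y w, z⟫)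
    (x : V) (hx : x ∈ Sig) (y : V) (hy : y ∈ Sig)
    (hxy : Orthonormal ℝ (![x, y]))
    (u : V) (hu : u ∈ Sigᗮ) (hu1 : ‖u‖ = 1)
    (hR0 : R x y u ≠ 0) (hRperp : R x y u ∈ Sigᗮ)
    (v : V) (hv : v = ‖R x y u‖⁻¹ • R x y u) :
    (⟪ω x u + ω y v, ω x v - ω y u⟫ = 0 ∧
      ⟪ω x u + ω y v, ω x v + ω y u⟫ = 0 ∧
      ⟪ω x v - ω y u, ω x v + ω y u⟫ = 0) ∧
    (‖ω x u + ω y v‖ = Real.sqrt 2 ∧ ‖ω x v - ω y u‖ = Real.sqrt 2 ∧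
      ‖ω x v + ω y u‖ = Real.sqrt 2) ∧
    (⟪ρ (ω x u + ω y v), ω x u + ω y v⟫ + ⟪ρ (ω x v - ω y u), ω x v - ω y u⟫ +
      ⟪ρ (ω x v + ω y u), ω x v + ω y u⟫ = -‖R x y u‖ ∧ -‖R x y u‖ < 0) ∧
    ¬ (∀ ξ : Fin 3 → Λ, Orthonormal ℝ ξ → 0 ≤ ∑ i : Fin 3, ⟪ρ (ξ i), ξ i⟫) := by
  have hα : 0 < ‖R x y u‖ := norm_pos_iff.mpr hR0
  have hvperp : v ∈ Sigᗮ := hv ▸ Sigᗮ.smul_mem _ hRperp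
  have hRuv : ⟪R x y u, v⟫ = ‖R x y u‖ := by
    rw [hv, real_inner_smul_right, real_inner_self_eq_norm_sq]
    field_simp
  have huv : ⟪u, v⟫ = 0 := by
    rw [hv, real_inner_smul_right, real_inner_comm, show ⟪R x y u, u⟫ = 0 by
      linarith [hanti2 x y u u], mul_zero]
  have huu : ⟪u, u⟫ = 1 := by rw [real_inner_self_eq_norm_sq, hu1, one_pow]
  have hvv : ⟪v, v⟫ = 1 := by
    rw [real_inner_self_eq_norm_sq, hv, norm_smul, norm_inv, norm_norm, inv_mul_cancel₀ hα.ne',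
      one_pow]
  have hξ₂ : ω x v - ω y u = ω x v + ω y (-u) := by rw [map_neg, sub_eq_add_neg]
  have gram := inner_wedge_add_wedge hωinner hx hy hxy
  have quad := inner_map_wedge_add_wedge hanti1 hanti2 hpair hflat hρ hx hy
  have horth : ⟪ω x u + ω y v, ω x v - ω y u⟫ = 0 ∧ ⟪ω x u + ω y v, ω x v + ω y u⟫ = 0 ∧
      ⟪ω x v - ω y u, ω x v + ω y u⟫ = 0 := by
    simp only [hξ₂, gram hu hvperp, gram hvperp (neg_mem hu), inner_neg_left, inner_neg_right,
      real_inner_comm u v, huv, hvv, huu]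
    norm_num
  have hnorm : ‖ω x u + ω y v‖ = √2 ∧ ‖ω x v - ω y u‖ = √2 ∧ ‖ω x v + ω y u‖ = √2 := by
    simp only [hξ₂, norm_eq_sqrt_real_inner, gram hu hvperp, gram hvperp (neg_mem hu),
      gram hvperp hu, inner_neg_left, inner_neg_right, huu, hvv, neg_neg]
    norm_num
  have hsum : ⟪ρ (ω x u + ω y v), ω x u + ω y v⟫ + ⟪ρ (ω x v - ω y u), ω x v - ω y u⟫ +
      ⟪ρ (ω x v + ω y u), ω x v + ω y u⟫ = -‖R x y u‖ := by
    rw [hξ₂, quad hu hvperp, quad hvperp (neg_mem hu), quad hvperp hu, map_neg, inner_neg_left,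
      ← hRuv, ← two_mul_inner_curvature_of_flat hanti1 hanti2 hpair hbianchi hflat hx hy hvperp]
    ring
  have hneg : -‖R x y u‖ < 0 := neg_lt_zero.mpr hα
  refine ⟨horth, hnorm, ⟨hsum, hneg⟩, fun hthree => ?_⟩
  obtain ⟨h12, h13, h23⟩ := horth
  obtain ⟨hn1, hn2, hn3⟩ := hnorm
  obtain ⟨η, hη, hηneg⟩ := exists_orthonormal_triple_sum_inner_map_neg ρ (by positivity)
    hn1 hn2 hn3 h12 h13 h23 (hsum ▸ hneg)
  exact (hthree η hη).not_gt hηneg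

/-- Setting as in the previous statement (with moreover v ⊥ u).  The three bivectors
ξ₁ = x∧u + y∧v, ξ₂ = x∧v - y∧u, ξ₃ = x∧v + y∧u are mutually orthogonal of norm √2,
the sum of the quadratic form of the curvature operator ρ over them equals
-α = -‖R(x,y)u‖ < 0, and consequently ρ is not 3-nonnegative: there is an orthonormal
triple of bivectors on which the quadratic form of ρ sums to a negative number. -/
theorem stmt11 {V : Type*} [NormedAddCommGroup V] [InnerProductSpace ℝ V] [FiniteDimensional ℝ V] (Sig : Submodule ℝ V)
    (R : V →ₗ[ℝ] V →ₗ[ℝ] V →ₗ[ℝ] V)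
    (hanti1 : ∀ x y, R x y = - R y x)
    (hanti2 : ∀ x y z w, ⟪R x y z, w⟫ = - ⟪R x y w, z⟫)
    (hpair : ∀ x y z w, ⟪R x y z, w⟫ = ⟪R z w x, y⟫)
    (hbianchi : ∀ x y z, R x y z + R y z x + R z x y = 0)
    (hnonneg : ∀ x y, 0 ≤ ⟪R x y y, x⟫)
    (hflat : ∀ z ∈ Sig, ∀ u ∈ Sigᗮ, R z u z = 0)
    {Λ : Type*} [NormedAddCommGroup Λ] [InnerProductSpace ℝ Λ]
    (ω : V →ₗ[ℝ] V →ₗ[ℝ] Λ)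
    (hωinner : ∀ x y z w : V, ⟪ω x y, ω z w⟫ = ⟪x, z⟫ * ⟪y, w⟫ - ⟪x, w⟫ * ⟪y, z⟫)
    (ρ : Λ →ₗ[ℝ] Λ) (hρsym : ρ.IsSymmetric)
    (hρ : ∀ x y z w : V, ⟪ρ (ω x y), ω z w⟫ = ⟪R x y w, z⟫)
    (x : V) (hx : x ∈ Sig) (y : V) (hy : y ∈ Sig)
    (hxy : Orthonormal ℝ (![x, y]))
    (u : V) (hu : u ∈ Sigᗮ) (hu1 : ‖u‖ = 1)
    (hR0 : R x y u ≠ 0) (hRperp : R x y u ∈ Sigᗮ)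
    (v : V) (hv : v = ‖R x y u‖⁻¹ • R x y u) (huv : ⟪u, v⟫ = 0) :
    (⟪ω x u + ω y v, ω x v - ω y u⟫ = 0 ∧
      ⟪ω x u + ω y v, ω x v + ω y u⟫ = 0 ∧
      ⟪ω x v - ω y u, ω x v + ω y u⟫ = 0) ∧
    (‖ω x u + ω y v‖ = Real.sqrt 2 ∧ ‖ω x v - ω y u‖ = Real.sqrt 2 ∧
      ‖ω x v + ω y u‖ = Real.sqrt 2) ∧
    (⟪ρ (ω x u + ω y v), ω x u + ω y v⟫ + ⟪ρ (ω x v - ω y u), ω x v - ω y u⟫ +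
      ⟪ρ (ω x v + ω y u), ω x v + ω y u⟫ = -‖R x y u‖ ∧ -‖R x y u‖ < 0) ∧
    ¬ (∀ ξ : Fin 3 → Λ, Orthonormal ℝ ξ → 0 ≤ ∑ i : Fin 3, ⟪ρ (ξ i), ξ i⟫) :=
  stmt11_general Sig R hanti1 hanti2 hpair hbianchi hflat ω hωinner ρ hρ x hx y hy hxy u hu hu1 hR0
    hRperp v hv
end

section
/- Let R be an algebraic curvature tensor on V = Σ ⊕ Σ^⊥ with nonnegative sectional curvature and R(z,u)z = 0 for all z ∈ Σ, u ∈ Σ^⊥. If the curvature operator ρ of R is 3-nonnegative, then R(x,y)u = 0 for all x, y ∈ Σ and u ∈ Σ^⊥. -/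
/-!
Polarizing the flatness `R z u z = 0` and applying the first Bianchi identity gives
`R x y u = 2 R x u y` for `x, y ∈ Σ`, `u ∈ Σᗮ`, so it suffices to show that `R x u y` is
orthogonal to both `Σ` and `Σᗮ`. Its `Σ`-components `X = ⟪R x y z, u⟫` satisfy `X = -2 X'`
with `X'` the cyclic permutation, which forces them to vanish. Its `Σᗮ`-components
`⟪R a w v, b⟫` are cross terms of `ρ`: for orthonormal `a, b ∈ Σ` and `w, v ∈ Σᗮ` the bivectors
`a ∧ v, b ∧ w, a ∧ w, b ∧ v` are orthonormal and, by flatness, `ρ`-isotropic, so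
3-nonnegativity applied to `a ∧ v, b ∧ w, (a ∧ w ± b ∧ v)/√2` gives `±⟪R a w v, b⟫ ≥ 0`.
Homogeneity and one Gram–Schmidt step extend this to all `a, b, w, v`.
-/

open scoped RealInnerProductSpace

theorem LinearMap.inner_cross_eq_zero_of_three_nonneg {Λ : Type*} [NormedAddCommGroup Λ]
    [InnerProductSpace ℝ Λ] {ρ : Λ →ₗ[ℝ] Λ}
    (h3 : ∀ ξ : Fin 3 → Λ, Orthonormal ℝ ξ → 0 ≤ ∑ i : Fin 3, ⟪ρ (ξ i), ξ i⟫)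
    {e : Fin 4 → Λ} (he : Orthonormal ℝ e) (hnull : ∀ i, ⟪ρ (e i), e i⟫ = 0) :
    ⟪ρ (e 2), e 3⟫ + ⟪ρ (e 3), e 2⟫ = 0 := by
  rw [orthonormal_iff_ite] at he
  set c : ℝ := (√2)⁻¹
  have hc : c * c = 1 / 2 := by
    rw [← mul_inv, Real.mul_self_sqrt zero_le_two, one_div]
  have signed : ∀ ε : ℝ, ε * ε = 1 → 0 ≤ ε * (⟪ρ (e 2), e 3⟫ + ⟪ρ (e 3), e 2⟫) := by
    intro ε hε
    have hξ : Orthonormal ℝ ![e 0, e 1, c • (e 2 + ε • e 3)] := by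
      rw [orthonormal_iff_ite]
      intro i j
      fin_cases i <;> fin_cases j <;>
        simp [he, inner_add_left, inner_add_right, real_inner_smul_left,
          real_inner_smul_right, -inner_self_eq_norm_sq_to_K]
      linear_combination (1 + ε * ε) * hc + hε / 2
    have hsum := h3 _ hξ
    simp only [Fin.sum_univ_three, Matrix.cons_val, hnull, map_smul, map_add,
      inner_add_left, inner_add_right, real_inner_smul_left, real_inner_smul_right] at hsum
    nlinarith
  linarith [signed 1 (by norm_num), signed (-1) (by norm_num)]

namespace CurvatureTensor

section Module

variable {K M : Type*} [CommRing K] [AddCommGroup M] [Module K M]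
  {R : M →ₗ[K] M →ₗ[K] M →ₗ[K] M} {S T : Submodule K M}

theorem apply_swap_eq_neg_of_flat (hflat : ∀ z ∈ S, ∀ u ∈ T, R z u z = 0)
    {a b w : M} (ha : a ∈ S) (hb : b ∈ S) (hw : w ∈ T) : R a w b = -R b w a := by
  have h := hflat (a + b) (S.add_mem ha hb) w hw
  simp only [map_add, LinearMap.add_apply, hflat a ha w hw, hflat b hb w hw, zero_add,
    add_zero] at h
  exact eq_neg_of_add_eq_zero_left ((add_comm _ _).trans h)

theorem apply_eq_two_smul_of_flat (hanti1 : ∀ x y, R x y = -R y x)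
    (hbianchi : ∀ x y z, R x y z + R y z x + R z x y = 0)
    (hflat : ∀ z ∈ S, ∀ u ∈ T, R z u z = 0)
    {a b w : M} (ha : a ∈ S) (hb : b ∈ S) (hw : w ∈ T) : R a b w = (2 : K) • R a w b := by
  have h := hbianchi a b w
  rw [hanti1 w a, LinearMap.neg_apply, apply_swap_eq_neg_of_flat hflat hb ha hw] at h
  rw [two_smul]
  linear_combination (norm := abel) h

end Module

variable {V : Type*} [NormedAddCommGroup V] [InnerProductSpace ℝ V]
  {R : V →ₗ[ℝ] V →ₗ[ℝ] V →ₗ[ℝ] V} {S T : Submodule ℝ V}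

theorem inner_apply_comm (hanti1 : ∀ x y, R x y = -R y x)
    (hanti2 : ∀ x y z w, ⟪R x y z, w⟫ = -⟪R x y w, z⟫)
    (hpair : ∀ x y z w, ⟪R x y z, w⟫ = ⟪R z w x, y⟫) (x y z t : V) :
    ⟪R x y z, t⟫ = ⟪R t z y, x⟫ := by
  rw [hpair, hanti1 t z, LinearMap.neg_apply, inner_neg_left, hanti2 z t y x, neg_neg]

theorem inner_apply_self_eq_zero_of_flat (hanti2 : ∀ x y z w, ⟪R x y z, w⟫ = -⟪R x y w, z⟫)
    (hflat : ∀ z ∈ S, ∀ u ∈ T, R z u z = 0) {a w : V} (ha : a ∈ S) (hw : w ∈ T) (v : V) :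
    ⟪R a w v, a⟫ = 0 := by
  rw [hanti2, hflat a ha w hw, inner_zero_left, neg_zero]

theorem inner_apply_apply_self_eq_zero_of_flat (hanti1 : ∀ x y, R x y = -R y x)
    (hanti2 : ∀ x y z w, ⟪R x y z, w⟫ = -⟪R x y w, z⟫)
    (hpair : ∀ x y z w, ⟪R x y z, w⟫ = ⟪R z w x, y⟫)
    (hflat : ∀ z ∈ S, ∀ u ∈ T, R z u z = 0) {a b w : V} (ha : a ∈ S) (hb : b ∈ S)
    (hw : w ∈ T) : ⟪R a w w, b⟫ = 0 := by
  have hcomm : ⟪R a w w, b⟫ = ⟪R b w w, a⟫ := inner_apply_comm hanti1 hanti2 hpair a w w b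
  have hswap : ⟪R a w w, b⟫ = -⟪R b w w, a⟫ := by
    rw [hanti2 a w w b, apply_swap_eq_neg_of_flat hflat ha hb hw, inner_neg_left,
      hanti2 b w a w, neg_neg]
  linarith

theorem inner_apply_eq_zero_of_three_mem_of_flat (hanti1 : ∀ x y, R x y = -R y x)
    (hanti2 : ∀ x y z w, ⟪R x y z, w⟫ = -⟪R x y w, z⟫)
    (hpair : ∀ x y z w, ⟪R x y z, w⟫ = ⟪R z w x, y⟫)
    (hbianchi : ∀ x y z, R x y z + R y z x + R z x y = 0)
    (hflat : ∀ z ∈ S, ∀ u ∈ T, R z u z = 0) {a b c w : V} (ha : a ∈ S) (hb : b ∈ S)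
    (hc : c ∈ S) (hw : w ∈ T) : ⟪R a b c, w⟫ = 0 := by
  -- going once around the cycle gives `X = -8 X`
  have cycle : ∀ {p q r : V}, p ∈ S → q ∈ S → r ∈ S → ⟪R p q r, w⟫ = -2 * ⟪R q r p, w⟫ := by
    intro p q r hp hq hr
    rw [hanti2, apply_eq_two_smul_of_flat hanti1 hbianchi hflat hp hq hw,
      real_inner_smul_left, hpair p w q r]
    ring
  linarith [cycle ha hb hc, cycle hb hc ha, cycle hc ha hb]

variable {Λ : Type*} [NormedAddCommGroup Λ] [InnerProductSpace ℝ Λ]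
  {ω : V →ₗ[ℝ] V →ₗ[ℝ] Λ} {ρ : Λ →ₗ[ℝ] Λ}

theorem inner_apply_eq_zero_of_orthonormal (hanti1 : ∀ x y, R x y = -R y x)
    (hanti2 : ∀ x y z w, ⟪R x y z, w⟫ = -⟪R x y w, z⟫)
    (hpair : ∀ x y z w, ⟪R x y z, w⟫ = ⟪R z w x, y⟫)
    (hflat : ∀ z ∈ S, ∀ u ∈ T, R z u z = 0) (hST : S ⟂ T)
    (hωinner : ∀ x y z w : V, ⟪ω x y, ω z w⟫ = ⟪x, z⟫ * ⟪y, w⟫ - ⟪x, w⟫ * ⟪y, z⟫)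
    (hρ : ∀ x y z w : V, ⟪ρ (ω x y), ω z w⟫ = ⟪R x y w, z⟫)
    (h3 : ∀ ξ : Fin 3 → Λ, Orthonormal ℝ ξ → 0 ≤ ∑ i : Fin 3, ⟪ρ (ξ i), ξ i⟫)
    {a b w v : V} (ha : a ∈ S) (hb : b ∈ S) (hw : w ∈ T) (hv : v ∈ T)
    (na : ‖a‖ = 1) (nb : ‖b‖ = 1) (nw : ‖w‖ = 1) (nv : ‖v‖ = 1)
    (hab : ⟪a, b⟫ = 0) (hwv : ⟪w, v⟫ = 0) : ⟪R a w v, b⟫ = 0 := by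
  have hON : Orthonormal ℝ ![ω a v, ω b w, ω a w, ω b v] := by
    rw [orthonormal_iff_ite]
    intro i j
    fin_cases i <;> fin_cases j <;>
      simp [hωinner, -inner_self_eq_norm_sq_to_K, real_inner_self_eq_norm_sq, na, nb, nw, nv,
        hab, hwv, real_inner_comm a b, real_inner_comm w v, hST.inner_eq ha hw, hST.inner_eq ha hv,
        hST.inner_eq hb hw, hST.inner_eq hb hv, real_inner_comm a w, real_inner_comm a v,
        real_inner_comm b w, real_inner_comm b v]
  have hnull : ∀ i, ⟪ρ (![ω a v, ω b w, ω a w, ω b v] i), ![ω a v, ω b w, ω a w, ω b v] i⟫ = 0 := by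
    intro i
    fin_cases i <;> simp only [Fin.zero_eta, Fin.mk_one, Fin.reduceFinMk, Matrix.cons_val, hρ] <;>
      exact inner_apply_self_eq_zero_of_flat hanti2 hflat ‹_› ‹_› _
  have hcross := LinearMap.inner_cross_eq_zero_of_three_nonneg h3 hON hnull
  simp only [Matrix.cons_val, hρ, inner_apply_comm hanti1 hanti2 hpair b v w a] at hcross
  linarith

theorem inner_apply_eq_zero_of_orthogonal (hanti1 : ∀ x y, R x y = -R y x)
    (hanti2 : ∀ x y z w, ⟪R x y z, w⟫ = -⟪R x y w, z⟫)
    (hpair : ∀ x y z w, ⟪R x y z, w⟫ = ⟪R z w x, y⟫)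
    (hflat : ∀ z ∈ S, ∀ u ∈ T, R z u z = 0) (hST : S ⟂ T)
    (hωinner : ∀ x y z w : V, ⟪ω x y, ω z w⟫ = ⟪x, z⟫ * ⟪y, w⟫ - ⟪x, w⟫ * ⟪y, z⟫)
    (hρ : ∀ x y z w : V, ⟪ρ (ω x y), ω z w⟫ = ⟪R x y w, z⟫)
    (h3 : ∀ ξ : Fin 3 → Λ, Orthonormal ℝ ξ → 0 ≤ ∑ i : Fin 3, ⟪ρ (ξ i), ξ i⟫)
    {a b w v : V} (ha : a ∈ S) (hb : b ∈ S) (hw : w ∈ T) (hv : v ∈ T)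
    (hab : ⟪a, b⟫ = 0) (hwv : ⟪w, v⟫ = 0) : ⟪R a w v, b⟫ = 0 := by
  rcases eq_or_ne a 0 with rfl | ha0
  · simp
  rcases eq_or_ne b 0 with rfl | hb0
  · simp
  rcases eq_or_ne w 0 with rfl | hw0
  · simp
  rcases eq_or_ne v 0 with rfl | hv0
  · simp
  have hunit := inner_apply_eq_zero_of_orthonormal hanti1 hanti2 hpair hflat hST hωinner hρ h3
    (S.smul_mem ‖a‖⁻¹ ha) (S.smul_mem ‖b‖⁻¹ hb) (T.smul_mem ‖w‖⁻¹ hw) (T.smul_mem ‖v‖⁻¹ hv)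
    (norm_smul_inv_norm ha0) (norm_smul_inv_norm hb0) (norm_smul_inv_norm hw0)
    (norm_smul_inv_norm hv0)
    (by simp [real_inner_smul_left, real_inner_smul_right, hab])
    (by simp [real_inner_smul_left, real_inner_smul_right, hwv])
  simp only [map_smul, LinearMap.smul_apply, real_inner_smul_left, real_inner_smul_right] at hunit
  simpa [ha0, hb0, hw0, hv0] using hunit

theorem inner_apply_eq_zero_of_isOrtho (hanti1 : ∀ x y, R x y = -R y x)
    (hanti2 : ∀ x y z w, ⟪R x y z, w⟫ = -⟪R x y w, z⟫)
    (hpair : ∀ x y z w, ⟪R x y z, w⟫ = ⟪R z w x, y⟫)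
    (hflat : ∀ z ∈ S, ∀ u ∈ T, R z u z = 0) (hST : S ⟂ T)
    (hωinner : ∀ x y z w : V, ⟪ω x y, ω z w⟫ = ⟪x, z⟫ * ⟪y, w⟫ - ⟪x, w⟫ * ⟪y, z⟫)
    (hρ : ∀ x y z w : V, ⟪ρ (ω x y), ω z w⟫ = ⟪R x y w, z⟫)
    (h3 : ∀ ξ : Fin 3 → Λ, Orthonormal ℝ ξ → 0 ≤ ∑ i : Fin 3, ⟪ρ (ξ i), ξ i⟫)
    {a b w v : V} (ha : a ∈ S) (hb : b ∈ S) (hw : w ∈ T) (hv : v ∈ T) :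
    ⟪R a w v, b⟫ = 0 := by
  rcases eq_or_ne a 0 with rfl | ha0
  · simp
  rcases eq_or_ne w 0 with rfl | hw0
  · simp
  set t : ℝ := ⟪a, b⟫ / ⟪a, a⟫
  set s : ℝ := ⟪w, v⟫ / ⟪w, w⟫
  have hab : ⟪a, b - t • a⟫ = 0 := by
    rw [inner_sub_right, real_inner_smul_right, div_mul_cancel₀ _ (inner_self_ne_zero.2 ha0),
      sub_self]
  have hwv : ⟪w, v - s • w⟫ = 0 := by
    rw [inner_sub_right, real_inner_smul_right, div_mul_cancel₀ _ (inner_self_ne_zero.2 hw0),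
      sub_self]
  have h := inner_apply_eq_zero_of_orthogonal hanti1 hanti2 hpair hflat hST hωinner hρ h3 ha
    (S.sub_mem hb (S.smul_mem t ha)) hw (T.sub_mem hv (T.smul_mem s hw)) hab hwv
  simp only [map_sub, map_smul, inner_sub_left, inner_sub_right, real_inner_smul_left,
    real_inner_smul_right, inner_apply_self_eq_zero_of_flat hanti2 hflat ha hw,
    inner_apply_apply_self_eq_zero_of_flat hanti1 hanti2 hpair hflat ha hb hw] at h
  linarith

end CurvatureTensor

open CurvatureTensor

theorem stmt12_general {V : Type*} [NormedAddCommGroup V] [InnerProductSpace ℝ V] (Sig : Submodule ℝ V)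
    (R : V →ₗ[ℝ] V →ₗ[ℝ] V →ₗ[ℝ] V)
    (hanti1 : ∀ x y, R x y = - R y x)
    (hanti2 : ∀ x y z w, ⟪R x y z, w⟫ = - ⟪R x y w, z⟫)
    (hpair : ∀ x y z w, ⟪R x y z, w⟫ = ⟪R z w x, y⟫)
    (hbianchi : ∀ x y z, R x y z + R y z x + R z x y = 0)
    (hflat : ∀ z ∈ Sig, ∀ u ∈ Sigᗮ, R z u z = 0)
    {Λ : Type*} [NormedAddCommGroup Λ] [InnerProductSpace ℝ Λ]
    (ω : V →ₗ[ℝ] V →ₗ[ℝ] Λ)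
    (hωinner : ∀ x y z w : V, ⟪ω x y, ω z w⟫ = ⟪x, z⟫ * ⟪y, w⟫ - ⟪x, w⟫ * ⟪y, z⟫)
    (ρ : Λ →ₗ[ℝ] Λ)
    (hρ : ∀ x y z w : V, ⟪ρ (ω x y), ω z w⟫ = ⟪R x y w, z⟫)
    (h3 : ∀ ξ : Fin 3 → Λ, Orthonormal ℝ ξ → 0 ≤ ∑ i : Fin 3, ⟪ρ (ξ i), ξ i⟫)
    (x : V) (hx : x ∈ Sig) (y : V) (hy : y ∈ Sig) (u : V) (hu : u ∈ Sigᗮ) :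
    R x y u = 0 := by
  have hmem : R x u y ∈ Sigᗮ := fun z hz => by
    rw [inner_eq_zero_symm, hpair]
    exact inner_apply_eq_zero_of_three_mem_of_flat hanti1 hanti2 hpair hbianchi hflat hy hz hx hu
  have hzero : R x u y = 0 := by
    rw [← inner_self_eq_zero (𝕜 := ℝ), hanti2, inner_apply_eq_zero_of_isOrtho hanti1 hanti2
      hpair hflat Sig.isOrtho_orthogonal_right hωinner hρ h3 hx hy hu hmem, neg_zero]
  rw [apply_eq_two_smul_of_flat hanti1 hbianchi hflat hx hy hu, hzero, smul_zero]

/-- If the curvature operator ρ of an algebraic curvature tensor R on V = Σ ⊕ Σᗮ with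
nonnegative sectional curvature and flat mixed planes is 3-nonnegative (equivalently:
∑ ⟪ρ ξᵢ, ξᵢ⟫ ≥ 0 for every orthonormal triple of bivectors), then R(x,y)u = 0 for all
x, y ∈ Σ and u ∈ Σᗮ. -/
theorem stmt12 {V : Type*} [NormedAddCommGroup V] [InnerProductSpace ℝ V] [FiniteDimensional ℝ V] (Sig : Submodule ℝ V)
    (R : V →ₗ[ℝ] V →ₗ[ℝ] V →ₗ[ℝ] V)
    (hanti1 : ∀ x y, R x y = - R y x)
    (hanti2 : ∀ x y z w, ⟪R x y z, w⟫ = - ⟪R x y w, z⟫)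
    (hpair : ∀ x y z w, ⟪R x y z, w⟫ = ⟪R z w x, y⟫)
    (hbianchi : ∀ x y z, R x y z + R y z x + R z x y = 0)
    (hnonneg : ∀ x y, 0 ≤ ⟪R x y y, x⟫)
    (hflat : ∀ z ∈ Sig, ∀ u ∈ Sigᗮ, R z u z = 0)
    {Λ : Type*} [NormedAddCommGroup Λ] [InnerProductSpace ℝ Λ]
    (ω : V →ₗ[ℝ] V →ₗ[ℝ] Λ)
    (hωinner : ∀ x y z w : V, ⟪ω x y, ω z w⟫ = ⟪x, z⟫ * ⟪y, w⟫ - ⟪x, w⟫ * ⟪y, z⟫)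
    (ρ : Λ →ₗ[ℝ] Λ) (hρsym : ρ.IsSymmetric)
    (hρ : ∀ x y z w : V, ⟪ρ (ω x y), ω z w⟫ = ⟪R x y w, z⟫)
    (h3 : ∀ ξ : Fin 3 → Λ, Orthonormal ℝ ξ → 0 ≤ ∑ i : Fin 3, ⟪ρ (ξ i), ξ i⟫)
    (x : V) (hx : x ∈ Sig) (y : V) (hy : y ∈ Sig) (u : V) (hu : u ∈ Sigᗮ) :
    R x y u = 0 :=
  stmt12_general Sig R hanti1 hanti2 hpair hbianchi hflat ω hωinner ρ hρ h3 x hx y hy u hu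
end

section
/- Let R be an algebraic curvature tensor on V = Σ ⊕ Σ^⊥ with nonnegative sectional curvature and R(z,u)z = 0 for all z ∈ Σ, u ∈ Σ^⊥. Let {x_i} be an orthonormal basis of Σ and {u_k} an orthonormal basis of Σ^⊥. Then ∑_{i,j,k,l} ⟨R(x_i,x_j)u_k, u_l⟩² ≤ (4/9) (∑_{i,j} ⟨R(x_i,x_j)x_j, x_i⟩) · (∑_{k,l} ⟨R(u_k,u_l)u_l, u_k⟩). -/
open scoped RealInnerProductSpace

/-!
Write `K(a,b) = ⟪R(a,b)b,a⟫`. For `x, y ∈ Σ` and `u, v ∈ Σᗮ`, `K(x + u, y + v)` collapses to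
`K(x,y) - 3 ⟪R(x,y)u,v⟫ + K(u,v)`: flatness kills the terms with one normal argument,
nonnegativity forces `⟪R(z,a)a,b⟫ = 0` and so kills those with three, and the first Bianchi
identity turns the four mixed terms into `-3 ⟪R(x,y)u,v⟫`. Replacing `u` by `t • u` gives a
nonnegative quadratic in `t`, whose discriminant yields the pointwise bound
`⟪R(x,y)u,v⟫² ≤ (4/9) K(x,y) K(u,v)`; summing it over the bases gives the theorem.
-/

structure IsAlgebraicCurvatureTensor {V : Type*} [NormedAddCommGroup V] [InnerProductSpace ℝ V]
    (R : V →ₗ[ℝ] V →ₗ[ℝ] V →ₗ[ℝ] V) : Prop where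
  antisymm : ∀ x y, R x y = -R y x
  inner_antisymm : ∀ x y z w, ⟪R x y z, w⟫ = -⟪R x y w, z⟫
  inner_pair_symm : ∀ x y z w, ⟪R x y z, w⟫ = ⟪R z w x, y⟫
  bianchi : ∀ x y z, R x y z + R y z x + R z x y = 0

namespace IsAlgebraicCurvatureTensor

variable {V : Type*} [NormedAddCommGroup V] [InnerProductSpace ℝ V]
  {R : V →ₗ[ℝ] V →ₗ[ℝ] V →ₗ[ℝ] V} {Sig : Submodule ℝ V}

lemma apply_swap_of_flat (hflat : ∀ z ∈ Sig, ∀ u ∈ Sigᗮ, R z u z = 0)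
    {a b w : V} (ha : a ∈ Sig) (hb : b ∈ Sig) (hw : w ∈ Sigᗮ) : R a w b = -R b w a := by
  have h := hflat (a + b) (Sig.add_mem ha hb) w hw
  simp only [map_add, LinearMap.add_apply, hflat a ha w hw, hflat b hb w hw,
    zero_add, add_zero] at h
  exact eq_neg_of_add_eq_zero_right h

/-- `K(z + t • b, a) = 2 t ⟪R(z,a)a,b⟫ + t² K(b,a)` can only stay nonnegative for all `t` if its
linear coefficient vanishes. -/
lemma apply_apply_normal_eq_zero (hR : IsAlgebraicCurvatureTensor R)
    (hnonneg : ∀ x y, 0 ≤ ⟪R x y y, x⟫) (hflat : ∀ z ∈ Sig, ∀ u ∈ Sigᗮ, R z u z = 0)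
    {z a : V} (hz : z ∈ Sig) (ha : a ∈ Sigᗮ) : R z a a = 0 := by
  have hzaaz : ⟪R z a a, z⟫ = 0 := by
    rw [hR.inner_antisymm, hflat z hz a ha, inner_zero_left, neg_zero]
  have hinner (b : V) : ⟪R z a a, b⟫ = 0 := by
    have hsymm : ⟪R b a a, z⟫ = ⟪R z a a, b⟫ := by
      rw [hR.inner_antisymm b, hR.inner_pair_symm b, hR.inner_antisymm z a b, neg_neg]
    have hquad : ∀ t : ℝ, 0 ≤ ⟪R b a a, b⟫ * (t * t) + 2 * ⟪R z a a, b⟫ * t + 0 := by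
      intro t
      have h := hnonneg (z + t • b) a
      simp only [map_add, map_smul, LinearMap.add_apply, LinearMap.smul_apply, inner_add_left,
        inner_add_right, real_inner_smul_left, real_inner_smul_right, hzaaz, hsymm] at h
      linarith
    have := discrim_le_zero hquad
    rw [discrim] at this
    nlinarith [sq_nonneg ⟪R z a a, b⟫]
  exact inner_self_eq_zero.mp (hinner _)

lemma two_mul_inner_apply_mixed (hR : IsAlgebraicCurvatureTensor R)
    (hflat : ∀ z ∈ Sig, ∀ u ∈ Sigᗮ, R z u z = 0)
    {x y v : V} (hx : x ∈ Sig) (hy : y ∈ Sig) (hv : v ∈ Sigᗮ) (w : V) :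
    2 * ⟪R x v y, w⟫ = ⟪R x y v, w⟫ := by
  have h := congrArg (⟪·, w⟫) (hR.bianchi x y v)
  simp only [inner_add_left, inner_zero_left, apply_swap_of_flat hflat hy hx hv,
    hR.antisymm v x, LinearMap.neg_apply, inner_neg_left] at h
  linarith

lemma inner_apply_mixed_sum (hR : IsAlgebraicCurvatureTensor R)
    (hflat : ∀ z ∈ Sig, ∀ u ∈ Sigᗮ, R z u z = 0)
    {x y v : V} (hx : x ∈ Sig) (hy : y ∈ Sig) (hv : v ∈ Sigᗮ) (u : V) :
    ⟪R x y v, u⟫ + ⟪R u v y, x⟫ + ⟪R x v y, u⟫ + ⟪R u y v, x⟫ = -3 * ⟪R x y u, v⟫ := by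
  have hxyvu : ⟪R x y v, u⟫ = -⟪R x y u, v⟫ := hR.inner_antisymm _ _ _ _
  have huvyx : ⟪R u v y, x⟫ = -⟪R x y u, v⟫ := by
    rw [hR.inner_pair_symm, hR.antisymm y, LinearMap.neg_apply, inner_neg_left]
  have hxvyu : 2 * ⟪R x v y, u⟫ = -⟪R x y u, v⟫ := by
    rw [hR.two_mul_inner_apply_mixed hflat hx hy hv, hxyvu]
  have huyvx : ⟪R u y v, x⟫ = ⟪R x v y, u⟫ := by
    rw [hR.inner_pair_symm, hR.antisymm v, LinearMap.neg_apply, inner_neg_left,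
      hR.inner_antisymm, neg_neg]
  linear_combination hxyvu + huvyx + hxvyu + huyvx

lemma inner_apply_add_add (hR : IsAlgebraicCurvatureTensor R)
    (hnonneg : ∀ x y, 0 ≤ ⟪R x y y, x⟫) (hflat : ∀ z ∈ Sig, ∀ u ∈ Sigᗮ, R z u z = 0)
    {x y u v : V} (hx : x ∈ Sig) (hy : y ∈ Sig) (hu : u ∈ Sigᗮ) (hv : v ∈ Sigᗮ) :
    ⟪R (x + u) (y + v) (y + v), x + u⟫ = ⟪R x y y, x⟫ - 3 * ⟪R x y u, v⟫ + ⟪R u v v, u⟫ := by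
  have hxvv := hR.apply_apply_normal_eq_zero hnonneg hflat hx hv
  have hyuu := hR.apply_apply_normal_eq_zero hnonneg hflat hy hu
  have hflat_xv := hflat x hx v hv
  have hflat_yu := hflat y hy u hu
  have huyyx : ⟪R u y y, x⟫ = 0 := by
    rw [hR.antisymm u, LinearMap.neg_apply, hflat_yu, neg_zero, inner_zero_left]
  have hxvyx : ⟪R x v y, x⟫ = 0 := by
    rw [hR.inner_antisymm, hflat_xv, inner_zero_left, neg_zero]
  have hxyvx : ⟪R x y v, x⟫ = 0 := by
    rw [hR.inner_antisymm, hR.inner_pair_symm, hflat_xv, inner_zero_left, neg_zero]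
  have hxyyu : ⟪R x y y, u⟫ = 0 := by
    rw [hR.inner_pair_symm, hR.inner_antisymm, hflat_yu, inner_zero_left, neg_zero]
  have huvvx : ⟪R u v v, x⟫ = 0 := by
    rw [hR.inner_pair_symm, hR.antisymm v, LinearMap.neg_apply, inner_neg_left,
      hR.inner_antisymm, hxvv, inner_zero_left, neg_neg]
  have huyvu : ⟪R u y v, u⟫ = 0 := by
    rw [hR.antisymm u, LinearMap.neg_apply, inner_neg_left, hR.inner_antisymm, hyuu,
      inner_zero_left, neg_neg]
  have huvyu : ⟪R u v y, u⟫ = 0 := by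
    rw [hR.inner_antisymm, hR.inner_pair_symm, hR.antisymm u, LinearMap.neg_apply,
      inner_neg_left, hyuu, inner_zero_left, neg_neg]
  have huyyu : ⟪R u y y, u⟫ = 0 := by
    rw [hR.antisymm u, LinearMap.neg_apply, hflat_yu, neg_zero, inner_zero_left]
  have hmixed := hR.inner_apply_mixed_sum hflat hx hy hv u
  simp only [map_add, LinearMap.add_apply, inner_add_left, inner_add_right, hxvv,
    inner_zero_left]
  linear_combination huyyx + hxvyx + hxyvx + hxyyu + huvvx + huyvu + huvyu + huyyu + hmixed

theorem sq_inner_apply_le (hR : IsAlgebraicCurvatureTensor R)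
    (hnonneg : ∀ x y, 0 ≤ ⟪R x y y, x⟫) (hflat : ∀ z ∈ Sig, ∀ u ∈ Sigᗮ, R z u z = 0)
    {x y u v : V} (hx : x ∈ Sig) (hy : y ∈ Sig) (hu : u ∈ Sigᗮ) (hv : v ∈ Sigᗮ) :
    ⟪R x y u, v⟫ ^ 2 ≤ 4 / 9 * ⟪R x y y, x⟫ * ⟪R u v v, u⟫ := by
  have hquad : ∀ t : ℝ,
      0 ≤ ⟪R u v v, u⟫ * (t * t) + (-3 * ⟪R x y u, v⟫) * t + ⟪R x y y, x⟫ := by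
    intro t
    have h := hnonneg (x + t • u) (y + v)
    rw [hR.inner_apply_add_add hnonneg hflat hx hy (Sig.orthogonal.smul_mem t hu) hv] at h
    simp only [map_smul, LinearMap.smul_apply, real_inner_smul_left, real_inner_smul_right] at h
    linarith
  have := discrim_le_zero hquad
  rw [discrim] at this
  linarith

end IsAlgebraicCurvatureTensor

theorem stmt13_general {V : Type*} [NormedAddCommGroup V] [InnerProductSpace ℝ V] (Sig : Submodule ℝ V)
    (R : V →ₗ[ℝ] V →ₗ[ℝ] V →ₗ[ℝ] V)
    (hanti1 : ∀ x y, R x y = - R y x)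
    (hanti2 : ∀ x y z w, ⟪R x y z, w⟫ = - ⟪R x y w, z⟫)
    (hpair : ∀ x y z w, ⟪R x y z, w⟫ = ⟪R z w x, y⟫)
    (hbianchi : ∀ x y z, R x y z + R y z x + R z x y = 0)
    (hnonneg : ∀ x y, 0 ≤ ⟪R x y y, x⟫)
    (hflat : ∀ z ∈ Sig, ∀ u ∈ Sigᗮ, R z u z = 0)
    {m p : ℕ} (x : Fin m → V) (hxS : ∀ i, x i ∈ Sig)
    (u : Fin p → V) (huS : ∀ k, u k ∈ Sigᗮ) :
    ∑ i : Fin m, ∑ j : Fin m, ∑ k : Fin p, ∑ l : Fin p, ⟪R (x i) (x j) (u k), u l⟫ ^ 2 ≤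
      (4 / 9 : ℝ) * (∑ i : Fin m, ∑ j : Fin m, ⟪R (x i) (x j) (x j), x i⟫) *
        (∑ k : Fin p, ∑ l : Fin p, ⟪R (u k) (u l) (u l), u k⟫) := by
  have hR : IsAlgebraicCurvatureTensor R := ⟨hanti1, hanti2, hpair, hbianchi⟩
  calc _ ≤ ∑ i : Fin m, ∑ j : Fin m, ∑ k : Fin p, ∑ l : Fin p,
          4 / 9 * ⟪R (x i) (x j) (x j), x i⟫ * ⟪R (u k) (u l) (u l), u k⟫ := by
        gcongr with i _ j _ k _ l _
        exact hR.sq_inner_apply_le hnonneg hflat (hxS i) (hxS j) (huS k) (huS l)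
    _ = _ := by simp only [← Finset.mul_sum, ← Finset.sum_mul]

/-- Summing the pointwise inequality ⟪R(x,y)y,x⟫⟪R(u,v)v,u⟫ ≥ (9/4)⟪R(x,y)u,v⟫² over
orthonormal bases x of Σ and u of Σᗮ: the squared norm of the mixed curvature is bounded
by (4/9) times the product of the tangential and normal scalar curvature sums. -/
theorem stmt13 {V : Type*} [NormedAddCommGroup V] [InnerProductSpace ℝ V] [FiniteDimensional ℝ V] (Sig : Submodule ℝ V)
    (R : V →ₗ[ℝ] V →ₗ[ℝ] V →ₗ[ℝ] V)
    (hanti1 : ∀ x y, R x y = - R y x)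
    (hanti2 : ∀ x y z w, ⟪R x y z, w⟫ = - ⟪R x y w, z⟫)
    (hpair : ∀ x y z w, ⟪R x y z, w⟫ = ⟪R z w x, y⟫)
    (hbianchi : ∀ x y z, R x y z + R y z x + R z x y = 0)
    (hnonneg : ∀ x y, 0 ≤ ⟪R x y y, x⟫)
    (hflat : ∀ z ∈ Sig, ∀ u ∈ Sigᗮ, R z u z = 0)
    {m p : ℕ} (x : Fin m → V) (hxo : Orthonormal ℝ x) (hxS : ∀ i, x i ∈ Sig)
    (hxspan : Submodule.span ℝ (Set.range x) = Sig)
    (u : Fin p → V) (huo : Orthonormal ℝ u) (huS : ∀ k, u k ∈ Sigᗮ)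
    (huspan : Submodule.span ℝ (Set.range u) = Sigᗮ) :
    ∑ i : Fin m, ∑ j : Fin m, ∑ k : Fin p, ∑ l : Fin p, ⟪R (x i) (x j) (u k), u l⟫ ^ 2 ≤
      (4 / 9 : ℝ) * (∑ i : Fin m, ∑ j : Fin m, ⟪R (x i) (x j) (x j), x i⟫) *
        (∑ k : Fin p, ∑ l : Fin p, ⟪R (u k) (u l) (u l), u k⟫) :=
  stmt13_general Sig R hanti1 hanti2 hpair hbianchi hnonneg hflat x hxS u huS
end
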